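/- arXiv:1604.00890 — 6 statements merged into one kernel-verified Lean document; each statement's English description precedes it below -/
import Mathlib

section
/- Let G be a bipartite graph with bipartition (V₁, V₂), where V₁ and V₂ are nonempty, and suppose δ(G) > α̃(G). Then for every set S of vertices of G with |S| < δ(G) − α̃(G), the graph obtained from G by deleting the vertices of S is connected; in particular G is (δ(G) − α̃(G))-connected. -/
open scoped Classical

noncomputable section

/-- `α̃(G)` for a bipartite graph on `Fin n ⊕ Fin m`: the largest `k` such that there
exist `S₁ ⊆ V₁` and `S₂ ⊆ V₂` with `|S₁| = |S₂| = k` and no edges between `S₁` and `S₂`. -/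
def bipHole {n m : ℕ} (G : SimpleGraph (Fin n ⊕ Fin m)) : ℕ :=
  sSup {k : ℕ | ∃ S₁ : Finset (Fin n), ∃ S₂ : Finset (Fin m),
    S₁.card = k ∧ S₂.card = k ∧ ∀ a ∈ S₁, ∀ b ∈ S₂, ¬ G.Adj (Sum.inl a) (Sum.inr b)}

/-- A bipartite graph with nonempty parts satisfying `δ(G) > α̃(G)` is
`(δ(G) − α̃(G))`-connected: removing fewer than `δ(G) − α̃(G)` vertices leaves a
connected graph. -/
theorem bip_connectivity {n m : ℕ} (hn : 1 ≤ n) (hm : 1 ≤ m)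
    (G : SimpleGraph (Fin n ⊕ Fin m))
    (hbip₁ : ∀ a b : Fin n, ¬ G.Adj (Sum.inl a) (Sum.inl b))
    (hbip₂ : ∀ a b : Fin m, ¬ G.Adj (Sum.inr a) (Sum.inr b))
    (hδ : bipHole G < G.minDegree) :
    ∀ S : Finset (Fin n ⊕ Fin m), S.card < G.minDegree - bipHole G →
      (G.induce ((S : Set (Fin n ⊕ Fin m))ᶜ)).Connected := by
  classical
  intro S hS
  let V := Fin n ⊕ Fin m
  set δ := G.minDegree with hδdef
  set h := bipHole G with hhdef
  haveI : Nonempty V := ⟨Sum.inl ⟨0, hn⟩⟩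
  -- Key contradiction: no "hole" of size h+1 exists.
  have key : ∀ X : Finset (Fin n), ∀ Y : Finset (Fin m), h + 1 ≤ X.card →
      h + 1 ≤ Y.card → (∀ a ∈ X, ∀ b ∈ Y, ¬ G.Adj (Sum.inl a) (Sum.inr b)) → False := by
    intro X Y hX hY hXY
    obtain ⟨X', hX'sub, hX'card⟩ := Finset.exists_subset_card_eq hX
    obtain ⟨Y', hY'sub, hY'card⟩ := Finset.exists_subset_card_eq hY
    have hmem : h + 1 ∈ {k : ℕ | ∃ S₁ : Finset (Fin n), ∃ S₂ : Finset (Fin m),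
        S₁.card = k ∧ S₂.card = k ∧ ∀ a ∈ S₁, ∀ b ∈ S₂, ¬ G.Adj (Sum.inl a) (Sum.inr b)} := by
      exact ⟨X', Y', hX'card, hY'card, fun a ha b hb => hXY a (hX'sub ha) b (hY'sub hb)⟩
    have hbdd : BddAbove {k : ℕ | ∃ S₁ : Finset (Fin n), ∃ S₂ : Finset (Fin m),
        S₁.card = k ∧ S₂.card = k ∧ ∀ a ∈ S₁, ∀ b ∈ S₂, ¬ G.Adj (Sum.inl a) (Sum.inr b)} := by
      refine ⟨n, ?_⟩
      rintro k ⟨S₁, S₂, hc, -, -⟩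
      calc k = S₁.card := hc.symm
        _ ≤ (Finset.univ : Finset (Fin n)).card := Finset.card_le_card (Finset.subset_univ _)
        _ = n := by simp
    have : h + 1 ≤ h := le_csSup hbdd hmem
    omega
  have hSδ : S.card + h < δ := by omega
  -- The vertex set minus S is nonempty.
  have hScard_lt : S.card < n + m := by
    have hdeg : δ ≤ G.degree (Sum.inl ⟨0, hn⟩) := G.minDegree_le_degree _
    have : G.degree (Sum.inl ⟨0, hn⟩) ≤ n + m := by
      rw [← SimpleGraph.card_neighborFinset_eq_degree]
      calc (G.neighborFinset (Sum.inl ⟨0, hn⟩)).card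
          ≤ (Finset.univ : Finset V).card := Finset.card_le_card (Finset.subset_univ _)
        _ = n + m := by simp [V]
    omega
  have hne : ∃ x : V, x ∉ S := by
    by_contra hcon
    push_neg at hcon
    have : (Finset.univ : Finset V) ⊆ S := fun x _ => hcon x
    have := Finset.card_le_card this
    simp [V] at this
    omega
  obtain ⟨w, hw⟩ := hne
  by_contra hcon
  haveI hnonempty : Nonempty ((S : Set V)ᶜ : Set V) := ⟨⟨w, by simpa using hw⟩⟩
  have hnp : ¬ (G.induce ((S : Set V)ᶜ)).Preconnected := fun hp => hcon ⟨hp⟩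
  rw [SimpleGraph.Preconnected] at hnp
  push_neg at hnp
  obtain ⟨u, v, huv⟩ := hnp
  -- A : component of u ; B : rest
  set A : Finset V := Finset.univ.filter (fun x => ∃ hx : x ∈ ((S : Set V)ᶜ),
    (G.induce ((S : Set V)ᶜ)).Reachable u ⟨x, hx⟩) with hA
  have hAS : ∀ x ∈ A, x ∉ S := by
    intro x hx
    rw [hA, Finset.mem_filter] at hx
    obtain ⟨-, hx', -⟩ := hx
    simpa using hx'
  have hAu : (u : V) ∈ A := by
    rw [hA, Finset.mem_filter]
    exact ⟨Finset.mem_univ _, u.2, by rw [Subtype.coe_eta]⟩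
  have hAcl : ∀ x ∈ A, ∀ y : V, y ∉ S → G.Adj x y → y ∈ A := by
    intro x hx y hyS hadj
    rw [hA, Finset.mem_filter] at hx ⊢
    obtain ⟨-, hx', hreach⟩ := hx
    have hy' : y ∈ ((S : Set V)ᶜ) := by simpa using hyS
    refine ⟨Finset.mem_univ _, hy', ?_⟩
    have hadj' : (G.induce ((S : Set V)ᶜ)).Adj ⟨x, hx'⟩ ⟨y, hy'⟩ := hadj
    exact hreach.trans hadj'.reachable
  have hvA : (v : V) ∉ A := by
    intro hv
    rw [hA, Finset.mem_filter] at hv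
    obtain ⟨-, hv', hreach⟩ := hv
    exact huv (by rwa [Subtype.coe_eta] at hreach)
  set B : Finset V := Finset.univ.filter (fun x => x ∉ S ∧ x ∉ A) with hB
  have hBv : (v : V) ∈ B := by
    rw [hB, Finset.mem_filter]
    exact ⟨Finset.mem_univ _, fun hv => v.2 (Finset.mem_coe.2 hv), hvA⟩
  have hBS : ∀ x ∈ B, x ∉ S := by
    intro x hx; rw [hB, Finset.mem_filter] at hx; exact hx.2.1
  have hBcl : ∀ x ∈ B, ∀ y : V, y ∉ S → G.Adj x y → y ∈ B := by
    intro x hx y hyS hadj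
    rw [hB, Finset.mem_filter] at hx ⊢
    refine ⟨Finset.mem_univ _, hyS, fun hyA => ?_⟩
    exact hx.2.2 (hAcl y hyA x hx.2.1 hadj.symm)
  have hAB : ∀ x ∈ A, ∀ y ∈ B, ¬ G.Adj x y := by
    intro x hx y hy hadj
    rw [hB, Finset.mem_filter] at hy
    exact hy.2.2 (hAcl x hx y hy.2.1 hadj)
  -- Counting lemmas
  have count₁ : ∀ C : Finset V, (∀ x ∈ C, x ∉ S) →
      (∀ x ∈ C, ∀ y : V, y ∉ S → G.Adj x y → y ∈ C) → ∀ a : Fin n, Sum.inl a ∈ C →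
      δ ≤ S.card + (Finset.univ.filter (fun b : Fin m => Sum.inr b ∈ C)).card := by
    intro C hCS hCcl a haC
    have hsub : G.neighborFinset (Sum.inl a) ⊆
        S ∪ (Finset.univ.filter (fun b : Fin m => Sum.inr b ∈ C)).image Sum.inr := by
      intro y hy
      rw [SimpleGraph.mem_neighborFinset] at hy
      rcases y with c | b
      · exact absurd hy (hbip₁ a c)
      · by_cases hyS : Sum.inr b ∈ S
        · exact Finset.mem_union_left _ hyS
        · refine Finset.mem_union_right _ ?_
          rw [Finset.mem_image]
          exact ⟨b, Finset.mem_filter.2 ⟨Finset.mem_univ _, hCcl _ haC _ hyS hy⟩, rfl⟩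
    calc δ ≤ G.degree (Sum.inl a) := G.minDegree_le_degree _
      _ = (G.neighborFinset (Sum.inl a)).card := (SimpleGraph.card_neighborFinset_eq_degree _ _).symm
      _ ≤ (S ∪ (Finset.univ.filter (fun b : Fin m => Sum.inr b ∈ C)).image Sum.inr).card :=
          Finset.card_le_card hsub
      _ ≤ S.card + ((Finset.univ.filter (fun b : Fin m => Sum.inr b ∈ C)).image Sum.inr).card :=
          Finset.card_union_le _ _
      _ ≤ S.card + (Finset.univ.filter (fun b : Fin m => Sum.inr b ∈ C)).card := by
          gcongr; exact Finset.card_image_le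
  have count₂ : ∀ C : Finset V, (∀ x ∈ C, x ∉ S) →
      (∀ x ∈ C, ∀ y : V, y ∉ S → G.Adj x y → y ∈ C) → ∀ b : Fin m, Sum.inr b ∈ C →
      δ ≤ S.card + (Finset.univ.filter (fun a : Fin n => Sum.inl a ∈ C)).card := by
    intro C hCS hCcl b hbC
    have hsub : G.neighborFinset (Sum.inr b) ⊆
        S ∪ (Finset.univ.filter (fun a : Fin n => Sum.inl a ∈ C)).image Sum.inl := by
      intro y hy
      rw [SimpleGraph.mem_neighborFinset] at hy
      rcases y with a | c
      · by_cases hyS : Sum.inl a ∈ S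
        · exact Finset.mem_union_left _ hyS
        · refine Finset.mem_union_right _ ?_
          rw [Finset.mem_image]
          exact ⟨a, Finset.mem_filter.2 ⟨Finset.mem_univ _, hCcl _ hbC _ hyS hy⟩, rfl⟩
      · exact absurd hy (hbip₂ b c)
    calc δ ≤ G.degree (Sum.inr b) := G.minDegree_le_degree _
      _ = (G.neighborFinset (Sum.inr b)).card := (SimpleGraph.card_neighborFinset_eq_degree _ _).symm
      _ ≤ (S ∪ (Finset.univ.filter (fun a : Fin n => Sum.inl a ∈ C)).image Sum.inl).card :=
          Finset.card_le_card hsub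
      _ ≤ S.card + ((Finset.univ.filter (fun a : Fin n => Sum.inl a ∈ C)).image Sum.inl).card :=
          Finset.card_union_le _ _
      _ ≤ S.card + (Finset.univ.filter (fun a : Fin n => Sum.inl a ∈ C)).card := by
          gcongr; exact Finset.card_image_le
  set A₁ : Finset (Fin n) := Finset.univ.filter (fun a => Sum.inl a ∈ A) with hA₁
  set A₂ : Finset (Fin m) := Finset.univ.filter (fun b => Sum.inr b ∈ A) with hA₂
  set B₁ : Finset (Fin n) := Finset.univ.filter (fun a => Sum.inl a ∈ B) with hB₁
  set B₂ : Finset (Fin m) := Finset.univ.filter (fun b => Sum.inr b ∈ B) with hB₂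
  -- Big part lemmas: if A contains a left vertex, A₂ is large, etc.
  have bigA₂ : ∀ a : Fin n, Sum.inl a ∈ A → h + 1 ≤ A₂.card := by
    intro a ha; have := count₁ A hAS hAcl a ha; rw [← hA₂] at this; omega
  have bigA₁ : ∀ b : Fin m, Sum.inr b ∈ A → h + 1 ≤ A₁.card := by
    intro b hb; have := count₂ A hAS hAcl b hb; rw [← hA₁] at this; omega
  have bigB₂ : ∀ a : Fin n, Sum.inl a ∈ B → h + 1 ≤ B₂.card := by
    intro a ha; have := count₁ B hBS hBcl a ha; rw [← hB₂] at this; omega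
  have bigB₁ : ∀ b : Fin m, Sum.inr b ∈ B → h + 1 ≤ B₁.card := by
    intro b hb; have := count₂ B hBS hBcl b hb; rw [← hB₁] at this; omega
  -- cross non-adjacency
  have hA₁B₂ : ∀ a ∈ A₁, ∀ b ∈ B₂, ¬ G.Adj (Sum.inl a) (Sum.inr b) := by
    intro a ha b hb
    rw [hA₁, Finset.mem_filter] at ha
    rw [hB₂, Finset.mem_filter] at hb
    exact hAB _ ha.2 _ hb.2
  have hB₁A₂ : ∀ a ∈ B₁, ∀ b ∈ A₂, ¬ G.Adj (Sum.inl a) (Sum.inr b) := by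
    intro a ha b hb hadj
    rw [hB₁, Finset.mem_filter] at ha
    rw [hA₂, Finset.mem_filter] at hb
    exact hAB _ hb.2 _ ha.2 hadj.symm
  -- From any vertex of A, both A₁ and A₂ are large... case analysis.
  have largeA : (h + 1 ≤ A₁.card) ∨ (h + 1 ≤ A₂.card) := by
    rcases hu : (u : V) with a | b
    · exact Or.inr (bigA₂ a (hu ▸ hAu))
    · exact Or.inl (bigA₁ b (hu ▸ hAu))
  have largeB : (h + 1 ≤ B₁.card) ∨ (h + 1 ≤ B₂.card) := by
    rcases hv : (v : V) with a | b
    · exact Or.inr (bigB₂ a (hv ▸ hBv))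
    · exact Or.inl (bigB₁ b (hv ▸ hBv))
  -- upgrade: if A₂ large then A₁ large too (pick element of A₂), and symmetrically
  have upA : h + 1 ≤ A₂.card → h + 1 ≤ A₁.card := by
    intro hA2
    have : A₂.Nonempty := Finset.card_pos.1 (by omega)
    obtain ⟨b, hb⟩ := this
    rw [hA₂, Finset.mem_filter] at hb
    exact bigA₁ b hb.2
  have upA' : h + 1 ≤ A₁.card → h + 1 ≤ A₂.card := by
    intro hA1
    have : A₁.Nonempty := Finset.card_pos.1 (by omega)
    obtain ⟨a, ha⟩ := this
    rw [hA₁, Finset.mem_filter] at ha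
    exact bigA₂ a ha.2
  have upB : h + 1 ≤ B₁.card → h + 1 ≤ B₂.card := by
    intro hB1
    have : B₁.Nonempty := Finset.card_pos.1 (by omega)
    obtain ⟨a, ha⟩ := this
    rw [hB₁, Finset.mem_filter] at ha
    exact bigB₂ a ha.2
  have hA1large : h + 1 ≤ A₁.card := largeA.elim id upA
  have hB2large : h + 1 ≤ B₂.card := largeB.elim upB id
  exact key A₁ B₂ hA1large hB2large hA₁B₂
end
end

section
/- Let (G, C) be a unipolar arrangement whose set of side cliques (the vertex sets of the components of the induced subgraph on V(G)∖C) is nonempty. Let T₁, T₂ ⊆ V(G)∖C be sets each containing exactly one vertex from each side clique, such that T₁ ∩ T₂ equals the set of vertices lying in side cliques of size one. Let A₁ and A₂ be disjoint subsets of C. Suppose M₁ is a matching in G, each of whose edges joins a vertex of T₁ to a vertex of A₁, covering every vertex of T₁, and M₂ is a matching in G, each of whose edges joins a vertex of T₂ to a vertex of A₂, covering every vertex of T₂. Then G is Hamiltonian. -/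
/-!
Pick in every side clique `S` its vertex `t ∈ T₁` and its vertex `t' ∈ T₂`; they differ unless
`S = {t}`. Going from the `M₁`-partner of `t` to `t`, through the rest of `S` to `t'` and on to
the `M₂`-partner of `t'` gives a path that enters and leaves `S` through the central clique, and
all these end vertices are distinct because `A₁ ∩ A₂ = ∅`. Chaining these paths one after
another, followed by the unused vertices of `C`, closes a Hamiltonian cycle, since any two
distinct vertices of the clique `C` are adjacent.
-/

open scoped Classical

noncomputable section

/-- `(G, C)` is a unipolar arrangement: `C` is a clique (the central clique) and every
connected component of the subgraph induced on the complement of `C` is a clique. -/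
def IsUnipolarArrangement {V : Type*} (G : SimpleGraph V) (C : Set V) : Prop :=
  G.IsClique C ∧
    ∀ u v : (Cᶜ : Set V), (G.induce Cᶜ).Reachable u v → u ≠ v → (G.induce Cᶜ).Adj u v

theorem List.Nodup.length_eq_card {α : Type*} [Fintype α] {l : List α} (hnd : l.Nodup)
    (hmem : ∀ a, a ∈ l) : l.length = Fintype.card α := by
  rw [← List.toFinset_card_of_nodup hnd,
    Finset.eq_univ_of_forall (s := l.toFinset) (by simpa using hmem), Finset.card_univ]

theorem List.Nodup.head_ne_getLast {α : Type*} {l : List α} (hnd : l.Nodup)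
    (h2 : 2 ≤ l.length) :
    l.head (List.ne_nil_of_length_pos (by omega)) ≠
      l.getLast (List.ne_nil_of_length_pos (by omega)) := by
  rw [List.head_eq_getElem, List.getLast_eq_getElem, Ne, hnd.getElem_inj_iff]
  omega

theorem Set.Finite.exists_nodup_head?_getLast? {α : Type*} {s : Set α} (hs : s.Finite)
    {u w : α} (hu : u ∈ s) (hw : w ∈ s) (huw : u = w → s = {u}) :
    ∃ m : List α, m.Nodup ∧ (∀ v, v ∈ m ↔ v ∈ s) ∧ m.head? = some u ∧ m.getLast? = some w := by
  by_cases h : u = w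
  · subst h
    exact ⟨[u], List.nodup_singleton u, by simp [huw rfl], rfl, rfl⟩
  refine ⟨u :: ((hs.toFinset \ {u, w}).toList ++ [w]), ?_, fun v => ?_, rfl,
    by rw [← List.cons_append, List.getLast?_concat]⟩
  · simp [List.nodup_append, Finset.nodup_toList, h]
  · simp only [List.mem_cons, List.mem_append, Finset.mem_toList, Finset.mem_sdiff,
      Set.Finite.mem_toFinset, Finset.mem_insert, Finset.mem_singleton]
    grind

namespace SimpleGraph

variable {V : Type*} {G : SimpleGraph V}

theorem isHamiltonian_of_isChain [Fintype V] {l : List V} (hne : l ≠ []) (hnd : l.Nodup)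
    (hmem : ∀ v, v ∈ l) (h3 : 3 ≤ Fintype.card V) (hchain : l.IsChain G.Adj)
    (hclose : G.Adj (l.getLast hne) (l.head hne)) : G.IsHamiltonian := by
  intro _
  set p := Walk.ofSupport l hne hchain
  have hp : p.IsPath := Walk.IsPath.mk' (by simpa [p] using hnd)
  have hlen := hnd.length_eq_card hmem
  refine ⟨_, Walk.cons hclose p, Walk.isHamiltonianCycle_iff_isCycle_and_length_eq.2 ⟨?_, ?_⟩⟩
  · refine Path.cons_isCycle ⟨p, hp⟩ hclose fun he => ?_
    have := hp.length_eq_one_of_mem_edges (Sym2.eq_swap ▸ he)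
    simp only [p, Walk.length_ofSupport] at this
    omega
  · simp only [p, Walk.length_cons, Walk.length_ofSupport]
    omega

theorem IsClique.isChain_flatten {K : Set V} (hK : G.IsClique K) {P : List (List V)}
    (hne : [] ∉ P) (hchain : ∀ p ∈ P, p.IsChain G.Adj)
    (hhead : ∀ p ∈ P, ∀ x ∈ p.head?, x ∈ K) (hlast : ∀ p ∈ P, ∀ x ∈ p.getLast?, x ∈ K)
    (hnd : P.flatten.Nodup) : P.flatten.IsChain G.Adj := by
  refine (List.isChain_flatten hne).2 ⟨hchain, List.Pairwise.isChain ?_⟩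
  refine (List.nodup_flatten.1 hnd).2.imp_of_mem fun hp hq hpq x hx y hy => ?_
  exact hK (hlast _ hp x hx) (hhead _ hq y hy)
    fun h => hpq (List.mem_of_mem_getLast? hx) (h ▸ List.mem_of_mem_head? hy)

theorem IsClique.isHamiltonian_of_flatten [Fintype V] {K : Set V} (hK : G.IsClique K)
    {P : List (List V)} (hne : [] ∉ P) (hchain : ∀ p ∈ P, p.IsChain G.Adj)
    (hhead : ∀ p ∈ P, ∀ x ∈ p.head?, x ∈ K) (hlast : ∀ p ∈ P, ∀ x ∈ p.getLast?, x ∈ K)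
    (hnd : P.flatten.Nodup) (hmem : ∀ v, v ∈ P.flatten) (h3 : 3 ≤ Fintype.card V) :
    G.IsHamiltonian := by
  have hlen : 2 ≤ P.flatten.length := by
    rw [hnd.length_eq_card hmem]
    omega
  have hL : P.flatten ≠ [] := List.ne_nil_of_length_pos (by omega)
  have hfirst : P.flatten.head hL ∈ K := by
    obtain ⟨p, hp, hx⟩ :=
      List.exists_of_findSome?_eq_some (List.head?_flatten ▸ List.head_mem_head? hL)
    exact hhead p hp _ hx
  have hfinal : P.flatten.getLast hL ∈ K := by
    obtain ⟨p, hp, hx⟩ :=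
      List.exists_of_findSome?_eq_some (List.getLast?_flatten ▸ List.getLast_mem_getLast? hL)
    exact hlast p (List.mem_reverse.1 hp) _ hx
  exact isHamiltonian_of_isChain hL hnd hmem h3 (hK.isChain_flatten hne hchain hhead hlast hnd)
    (hK hfinal hfirst (hnd.head_ne_getLast hlen).symm)

theorem IsClique.isHamiltonian_of_pairwise_disjoint [Fintype V] {K : Set V}
    (hK : G.IsClique K) {ι : Type*} [Finite ι] {I : Set ι} {p : ι → List V}
    (hne : ∀ i ∈ I, p i ≠ []) (hnd : ∀ i ∈ I, (p i).Nodup)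
    (hchain : ∀ i ∈ I, (p i).IsChain G.Adj) (hhead : ∀ i ∈ I, ∀ x ∈ (p i).head?, x ∈ K)
    (hlast : ∀ i ∈ I, ∀ x ∈ (p i).getLast?, x ∈ K)
    (hdisj : I.Pairwise fun i j => (p i).Disjoint (p j)) (hcover : ∀ v, ∃ i ∈ I, v ∈ p i)
    (h3 : 3 ≤ Fintype.card V) : G.IsHamiltonian := by
  set P := (Set.toFinite I).toFinset.toList.map p
  have hI : ∀ i, i ∈ (Set.toFinite I).toFinset.toList ↔ i ∈ I := by simp
  have hP : ∀ q ∈ P, ∃ i ∈ I, p i = q := by simp [P]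
  refine hK.isHamiltonian_of_flatten (P := P) (fun hnil => ?_) (fun q hq => ?_)
    (fun q hq => ?_) (fun q hq => ?_) (List.nodup_flatten.2 ⟨fun q hq => ?_, ?_⟩)
    (fun v => ?_) h3
  · obtain ⟨i, hi, hpi⟩ := hP [] hnil
    exact hne i hi hpi
  · obtain ⟨i, hi, rfl⟩ := hP q hq
    exact hchain i hi
  · obtain ⟨i, hi, rfl⟩ := hP q hq
    exact hhead i hi
  · obtain ⟨i, hi, rfl⟩ := hP q hq
    exact hlast i hi
  · obtain ⟨i, hi, rfl⟩ := hP q hq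
    exact hnd i hi
  · exact List.pairwise_map.2 ((Finset.nodup_toList _).pairwise_of_forall_ne fun i hi j hj =>
      hdisj ((hI i).1 hi) ((hI j).1 hj))
  · obtain ⟨i, hi, hv⟩ := hcover v
    exact List.mem_flatten.2 ⟨p i, List.mem_map.2 ⟨i, (hI i).2 hi, rfl⟩, hv⟩

theorem IsClique.isHamiltonian_of_paths [Fintype V] {K : Set V} (hK : G.IsClique K)
    {ι : Type*} [Finite ι] {I : Set ι} {p : ι → List V}
    (hne : ∀ i ∈ I, p i ≠ []) (hnd : ∀ i ∈ I, (p i).Nodup)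
    (hchain : ∀ i ∈ I, (p i).IsChain G.Adj) (hhead : ∀ i ∈ I, ∀ x ∈ (p i).head?, x ∈ K)
    (hlast : ∀ i ∈ I, ∀ x ∈ (p i).getLast?, x ∈ K)
    (hdisj : I.Pairwise fun i j => (p i).Disjoint (p j))
    (hcover : ∀ v ∉ K, ∃ i ∈ I, v ∈ p i) (h3 : 3 ≤ Fintype.card V) : G.IsHamiltonian := by
  -- the vertices on none of the paths are added as one-vertex paths
  set R : Set V := {v | ∀ i ∈ I, v ∉ p i}
  have hRK : ∀ v ∈ R, v ∈ K := fun v hv => by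
    by_contra hvK
    obtain ⟨i, hi, hvi⟩ := hcover v hvK
    exact hv i hi hvi
  refine hK.isHamiltonian_of_pairwise_disjoint (I := {x : ι ⊕ V | x.elim (· ∈ I) (· ∈ R)})
    (p := Sum.elim p ([·])) ?_ ?_ ?_ ?_ ?_ ?_ (fun v => ?_) h3
  · rintro (i | c) hx
    exacts [hne i hx, List.cons_ne_nil c []]
  · rintro (i | c) hx
    exacts [hnd i hx, List.nodup_singleton c]
  · rintro (i | c) hx
    exacts [hchain i hx, List.isChain_singleton c]
  · rintro (i | c) hx x hx'
    · exact hhead i hx x hx'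
    · rw [Sum.elim_inr, List.head?_cons, Option.mem_some_iff] at hx'
      exact hx' ▸ hRK c hx
  · rintro (i | c) hx x hx'
    · exact hlast i hx x hx'
    · rw [Sum.elim_inr, List.getLast?_singleton, Option.mem_some_iff] at hx'
      exact hx' ▸ hRK c hx
  · rintro (i | c) hx (j | d) hy hij
    · exact hdisj hx hy fun h => hij (h ▸ rfl)
    · exact List.disjoint_singleton.2 (hy i hx)
    · exact List.singleton_disjoint.2 (hx j hy)
    · exact List.disjoint_singleton.2 (by simpa [eq_comm] using hij)
  · by_cases hv : v ∈ R
    · exact ⟨.inr v, hv, List.mem_singleton_self v⟩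
    · simp only [R, Set.mem_ofPred_eq, not_forall, not_not] at hv
      obtain ⟨i, hi, hvi⟩ := hv
      exact ⟨.inl i, hi, hvi⟩

theorem IsClique.exists_isChain_of_adj {s : Set V} (hs : G.IsClique s) (hfin : s.Finite)
    {a b u w : V} (hu : u ∈ s) (hw : w ∈ s) (huw : u = w → s = {u}) (ha : a ∉ s) (hb : b ∉ s)
    (hab : a ≠ b) (hau : G.Adj a u) (hwb : G.Adj w b) :
    ∃ l : List V, l.Nodup ∧ (∀ v, v ∈ l ↔ v = a ∨ v ∈ s ∨ v = b) ∧ l.IsChain G.Adj ∧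
      l.head? = some a ∧ l.getLast? = some b := by
  obtain ⟨m, hnd, hmem, hhead, hlast⟩ := hfin.exists_nodup_head?_getLast? hu hw huw
  have hm : m.IsChain G.Adj :=
    (hnd.pairwise_of_forall_ne fun x hx y hy => hs ((hmem x).1 hx) ((hmem y).1 hy)).isChain
  refine ⟨a :: (m ++ [b]), ?_, fun v => by simp [hmem], ?_, rfl,
    by rw [← List.cons_append, List.getLast?_concat]⟩
  · simp only [List.nodup_cons, List.nodup_append, List.mem_append, List.mem_singleton, hmem]
    grind
  · refine List.IsChain.cons (hm.append (List.isChain_singleton b) ?_) fun y hy => ?_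
    · simp [hlast, hwb]
    · rw [List.head?_append, hhead] at hy
      simp_all

theorem IsClique.isHamiltonian_of_handles [Fintype V] {K : Set V} (hK : G.IsClique K)
    {ι : Type*} [Finite ι] {I : Set ι} (hI : I.Nonempty) {s : ι → Set V} {a b u w : ι → V}
    (hs : ∀ i ∈ I, G.IsClique (s i)) (hsK : ∀ i ∈ I, s i ⊆ Kᶜ)
    (hsdisj : I.PairwiseDisjoint s) (hscover : ∀ v ∉ K, ∃ i ∈ I, v ∈ s i)
    (ha : Set.MapsTo a I K) (hb : Set.MapsTo b I K) (hainj : I.InjOn a) (hbinj : I.InjOn b)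
    (hab : ∀ i ∈ I, ∀ j ∈ I, a i ≠ b j)
    (hu : ∀ i ∈ I, u i ∈ s i) (hw : ∀ i ∈ I, w i ∈ s i) (huw : ∀ i ∈ I, u i = w i → s i = {u i})
    (hau : ∀ i ∈ I, G.Adj (a i) (u i)) (hwb : ∀ i ∈ I, G.Adj (w i) (b i)) :
    G.IsHamiltonian := by
  choose! l hlnd hlmem hlchain hlhead hllast using fun i hi =>
    (hs i hi).exists_isChain_of_adj (Set.toFinite _) (hu i hi) (hw i hi) (huw i hi)
      (fun h => hsK i hi h (ha hi)) (fun h => hsK i hi h (hb hi)) (hab i hi i hi)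
      (hau i hi) (hwb i hi)
  have hdisj : I.Pairwise fun i j => (l i).Disjoint (l j) := by
    intro i hi j hj hij v hvi hvj
    rw [hlmem i hi] at hvi
    rw [hlmem j hj] at hvj
    rcases hvi with rfl | hvi | rfl <;> rcases hvj with h | hvj | h
    · exact hij (hainj hi hj h)
    · exact hsK j hj hvj (ha hi)
    · exact hab i hi j hj h
    · exact hsK i hi hvi (h ▸ ha hj)
    · exact Set.disjoint_left.1 (hsdisj hi hj hij) hvi hvj
    · exact hsK i hi hvi (h ▸ hb hj)
    · exact hab j hj i hi h.symm
    · exact hsK j hj hvj (hb hi)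
    · exact hij (hbinj hi hj h)
  obtain ⟨i₀, hi₀⟩ := hI
  have hu₀ := hsK i₀ hi₀ (hu i₀ hi₀)
  refine hK.isHamiltonian_of_paths (I := I) (p := l)
    (fun i hi => List.ne_nil_of_mem ((hlmem i hi _).2 (.inl rfl))) hlnd hlchain
    (fun i hi x hx => ?_) (fun i hi x hx => ?_) hdisj (fun v hv => ?_)
    (Fintype.two_lt_card_iff.2 ⟨a i₀, u i₀, b i₀, fun h => hu₀ (h ▸ ha hi₀),
      hab i₀ hi₀ i₀ hi₀, fun h => hu₀ (h ▸ hb hi₀)⟩)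
  · rw [hlhead i hi, Option.mem_some_iff] at hx
    exact hx ▸ ha hi
  · rw [hllast i hi, Option.mem_some_iff] at hx
    exact hx ▸ hb hi
  · obtain ⟨i, hi, hvi⟩ := hscover v hv
    exact ⟨i, hi, (hlmem i hi v).2 (.inr (.inl hvi))⟩

theorem exists_injOn_adj_of_matching {T A : Set V} (hTA : Disjoint T A) {M : Set (Sym2 V)}
    (hedges : M ⊆ G.edgeSet)
    (hdisj : ∀ e₁ ∈ M, ∀ e₂ ∈ M, e₁ ≠ e₂ → ∀ v : V, v ∈ e₁ → v ∉ e₂)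
    (hjoin : ∀ e ∈ M, ∃ t ∈ T, ∃ a ∈ A, e = s(t, a)) (hcov : ∀ t ∈ T, ∃ e ∈ M, t ∈ e) :
    ∃ f : V → V, Set.MapsTo f T A ∧ T.InjOn f ∧ ∀ t ∈ T, G.Adj t (f t) := by
  have hpartner : ∀ t ∈ T, ∃ a ∈ A, s(t, a) ∈ M := by
    intro t ht
    obtain ⟨e, he, hte⟩ := hcov t ht
    obtain ⟨t', -, a, ha, rfl⟩ := hjoin e he
    rcases Sym2.mem_iff.1 hte with rfl | rfl
    · exact ⟨a, ha, he⟩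
    · exact absurd ha (Set.disjoint_left.1 hTA ht)
  choose! f hfA hfM using hpartner
  refine ⟨f, hfA, fun t ht t' ht' hff => ?_, fun t ht => hedges (hfM t ht)⟩
  by_contra hne
  refine hdisj _ (hfM t ht) _ (hfM t' ht') (fun h => ?_) (f t) (Sym2.mem_mk_right _ _)
    (hff ▸ Sym2.mem_mk_right _ _)
  rcases Sym2.eq_iff.1 h with ⟨h, -⟩ | ⟨h, -⟩
  · exact hne h
  · exact Set.disjoint_left.1 hTA ht (h ▸ hfA t' ht')

/-- For `t ∉ C` in a unipolar arrangement `(G, C)`, this is the side clique containing `t`. -/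
def sideClique (G : SimpleGraph V) (C : Set V) (t : V) : Set V :=
  {v | v ∉ C ∧ (t = v ∨ G.Adj t v)}

theorem sideClique_eq_singleton {C : Set V} {t : V} (ht : t ∉ C)
    (hiso : ∀ u ∈ Cᶜ, ¬ G.Adj u t) : G.sideClique C t = {t} := by
  ext v
  refine ⟨fun ⟨hv, htv⟩ => (htv.resolve_right fun h => hiso v hv h.symm).symm, ?_⟩
  rintro rfl
  exact ⟨ht, .inl rfl⟩

theorem pairwiseDisjoint_sideClique {C T : Set V}
    (hT : ∀ v ∈ Cᶜ, ∃! t, t ∈ T ∧ (t = v ∨ G.Adj t v)) : T.PairwiseDisjoint (G.sideClique C) :=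
  fun _ ht _ ht' hne => Set.disjoint_left.2 fun v hv hv' =>
    hne ((hT v hv.1).unique ⟨ht, hv.2⟩ ⟨ht', hv'.2⟩)

end SimpleGraph

open SimpleGraph

theorem IsUnipolarArrangement.adj_of_adj {V : Type*} {G : SimpleGraph V} {C : Set V}
    (hU : IsUnipolarArrangement G C) {u v w : V} (hu : u ∉ C) (hv : v ∉ C) (hw : w ∉ C)
    (huv : G.Adj u v) (hvw : G.Adj v w) (huw : u ≠ w) : G.Adj u w := by
  have hreach : (G.induce Cᶜ).Reachable ⟨u, hu⟩ ⟨w, hw⟩ :=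
    (show (G.induce Cᶜ).Adj ⟨u, hu⟩ ⟨v, hv⟩ from huv).reachable.trans
      (show (G.induce Cᶜ).Adj ⟨v, hv⟩ ⟨w, hw⟩ from hvw).reachable
  exact hU.2 _ _ hreach (by simpa using huw)

theorem IsUnipolarArrangement.isClique_sideClique {V : Type*} {G : SimpleGraph V} {C : Set V}
    (hU : IsUnipolarArrangement G C) {t : V} (ht : t ∉ C) : G.IsClique (G.sideClique C t) := by
  rintro x ⟨hx, rfl | htx⟩ y ⟨hy, rfl | hty⟩ hxy
  · exact absurd rfl hxy
  · exact hty
  · exact htx.symm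
  · exact hU.adj_of_adj hx ht hy htx.symm hty hxy

/-- For vertices `u, v ∉ C`, being in the same side clique is equivalent to `u = v ∨ G.Adj u v`. -/
theorem unipolar_matchings_hamiltonian {V : Type*} [Fintype V]
    (G : SimpleGraph V) (C : Set V) (hU : IsUnipolarArrangement G C)
    (hside : (Cᶜ : Set V).Nonempty)
    (T₁ T₂ : Set V) (hT₁sub : T₁ ⊆ Cᶜ) (hT₂sub : T₂ ⊆ Cᶜ)
    (hT₁ : ∀ v ∈ (Cᶜ : Set V), ∃! t, t ∈ T₁ ∧ (t = v ∨ G.Adj t v))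
    (hT₂ : ∀ v ∈ (Cᶜ : Set V), ∃! t, t ∈ T₂ ∧ (t = v ∨ G.Adj t v))
    (hcap : T₁ ∩ T₂ = {v | v ∈ (Cᶜ : Set V) ∧ ∀ u ∈ (Cᶜ : Set V), ¬ G.Adj u v})
    (A₁ A₂ : Set V) (hA₁ : A₁ ⊆ C) (hA₂ : A₂ ⊆ C) (hA : Disjoint A₁ A₂)
    (M₁ M₂ : Set (Sym2 V))
    (hM₁edges : M₁ ⊆ G.edgeSet)
    (hM₁disj : ∀ e₁ ∈ M₁, ∀ e₂ ∈ M₁, e₁ ≠ e₂ → ∀ v : V, v ∈ e₁ → v ∉ e₂)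
    (hM₁join : ∀ e ∈ M₁, ∃ t ∈ T₁, ∃ a ∈ A₁, e = s(t, a))
    (hM₁cov : ∀ t ∈ T₁, ∃ e ∈ M₁, t ∈ e)
    (hM₂edges : M₂ ⊆ G.edgeSet)
    (hM₂disj : ∀ e₁ ∈ M₂, ∀ e₂ ∈ M₂, e₁ ≠ e₂ → ∀ v : V, v ∈ e₁ → v ∉ e₂)
    (hM₂join : ∀ e ∈ M₂, ∃ t ∈ T₂, ∃ a ∈ A₂, e = s(t, a))
    (hM₂cov : ∀ t ∈ T₂, ∃ e ∈ M₂, t ∈ e) :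
    G.IsHamiltonian := by
  obtain ⟨f₁, hf₁A, hf₁inj, hf₁adj⟩ := exists_injOn_adj_of_matching
    (Set.disjoint_of_subset hT₁sub hA₁ disjoint_compl_left) hM₁edges hM₁disj hM₁join hM₁cov
  obtain ⟨f₂, hf₂A, hf₂inj, hf₂adj⟩ := exists_injOn_adj_of_matching
    (Set.disjoint_of_subset hT₂sub hA₂ disjoint_compl_left) hM₂edges hM₂disj hM₂join hM₂cov
  choose! r₂ hr₂T hr₂adj using fun t (ht : t ∉ C) => (hT₂ t ht).exists
  have hT₂T₁ : ∀ t ∈ T₁, r₂ t ∈ T₂ := fun t ht => hr₂T t (hT₁sub ht)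
  have hr₂mem : ∀ t ∈ T₁, r₂ t ∈ G.sideClique C t := fun t ht =>
    ⟨hT₂sub (hT₂T₁ t ht), (hr₂adj t (hT₁sub ht)).imp Eq.symm Adj.symm⟩
  have hS := pairwiseDisjoint_sideClique hT₁
  have hr₂inj : T₁.InjOn r₂ := fun t ht t' ht' h =>
    hS.elim_set ht ht' _ (hr₂mem t ht) (h ▸ hr₂mem t' ht')
  obtain ⟨t₀, ⟨ht₀, -⟩, -⟩ := hT₁ _ hside.some_mem
  refine hU.1.isHamiltonian_of_handles (I := T₁) (s := G.sideClique C) (u := id) (w := r₂)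
    (b := f₂ ∘ r₂) ⟨t₀, ht₀⟩ (fun t ht => hU.isClique_sideClique (hT₁sub ht))
    (fun _ _ _ hv => hv.1) hS (fun v hv => ?_)
    (hf₁A.mono_right hA₁) (fun t ht => hA₂ (hf₂A (hT₂T₁ t ht))) hf₁inj
    (hf₂inj.comp hr₂inj hT₂T₁) (fun t ht t' ht' => hA.ne_of_mem (hf₁A ht) (hf₂A (hT₂T₁ t' ht')))
    (fun t ht => ⟨hT₁sub ht, .inl rfl⟩) hr₂mem (fun t ht (hrt : t = r₂ t) => ?_)
    (fun t ht => (hf₁adj t ht).symm) (fun t ht => hf₂adj _ (hT₂T₁ t ht))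
  · obtain ⟨t, ⟨ht, htv⟩, -⟩ := hT₁ v hv
    exact ⟨t, ht, hv, htv⟩
  · have htt : t ∈ T₁ ∩ T₂ := ⟨ht, hrt ▸ hT₂T₁ t ht⟩
    rw [hcap] at htt
    exact sideClique_eq_singleton (hT₁sub ht) htt.2
end
end

section
/- For every ε ∈ (0,1) there exists m₀ such that for all m ≥ m₀ and all n with 1 ≤ n ≤ m, the probability that the random bipartite graph G_{n,m,1/2} contains a matching covering every vertex of V₁ satisfies 1 − 2^{−(1−ε)m} ≤ P(complete matching from V₁ to V₂ exists) ≤ 1 − 2^{−m}. -/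
/-!
Isolating a fixed vertex of `V₁` destroys every complete matching and has probability `2^{-m}`;
this gives the upper bound.

Conversely, by Hall's theorem a graph without a complete matching has a set `A ⊆ V₁` of size `k`
whose neighbourhood lies in a set `B ⊆ V₂` of size `k - 1`. A union bound over the pairs `(A, B)`
bounds the failure probability by `∑ₖ C(n,k) C(m,k-1) 2^{-k(m+1-k)}`. Bounding both binomial
coefficients by `m^{min(k, m+1-k)}` makes every term at most `m⁴ 2^{-m}`, so the failure probability
is at most `m⁵ 2^{-m} ≤ 2^{-(1-ε)m}` once `m` is large.
-/

open scoped Classical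

noncomputable section

/-- the probability that the random bipartite graph `G_{n,m,1/2}` contains a complete
matching from `V₁` (of size `n`) to `V₂` (of size `m`) -/
def completeMatchingProb (n m : ℕ) : ℝ :=
  (Nat.card {E : Finset (Fin n × Fin m) //
      ∃ f : Fin n → Fin m, Function.Injective f ∧ ∀ a : Fin n, (a, f a) ∈ E} : ℝ) /
    (2 : ℝ) ^ (n * m)

open Finset Filter

theorem Nat.choose_le_pow_min (m k : ℕ) : m.choose k ≤ m ^ min k (m - k) := by
  rcases le_or_gt k m with hkm | hmk
  · rcases le_total k (m - k) with h | h
    · rw [min_eq_left h]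
      exact Nat.choose_le_pow m k
    · rw [min_eq_right h, ← Nat.choose_symm hkm]
      exact Nat.choose_le_pow m (m - k)
  · rw [Nat.choose_eq_zero_of_lt hmk]
    exact Nat.zero_le _

theorem pow_mul_two_pow_le {m j : ℕ} (hm : m ^ 4 ≤ 2 ^ m) (hj : 1 ≤ j) (hjm : 2 * j ≤ m + 1) :
    m ^ (2 * j) * 2 ^ m ≤ m ^ 4 * 2 ^ (j * (m + 1 - j)) := by
  obtain rfl | ⟨i, rfl⟩ : j = 1 ∨ ∃ i, j = i + 2 := by
    rcases Nat.lt_or_ge j 2 with h | h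
    · exact Or.inl (by omega)
    · exact Or.inr ⟨j - 2, by omega⟩
  · rw [one_mul, Nat.add_sub_cancel]
    gcongr
    · omega
    · norm_num
  obtain ⟨t, rfl⟩ : ∃ t, m = t + i + 1 := ⟨m - i - 1, by omega⟩
  have ht : i + 2 ≤ t := by omega
  rw [show t + i + 1 + 1 - (i + 2) = t by omega]
  -- `m ^ 2 ≤ 2 ^ (m / 2)` pays for each of the `i` extra factors `m ^ 2`, after squaring
  have hsquare : ((t + i + 1) ^ (2 * i) * 2 ^ (t + i + 1)) ^ 2 =
      ((t + i + 1) ^ 4) ^ i * 2 ^ (2 * (t + i + 1)) := by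
    rw [mul_pow, ← pow_mul, ← pow_mul, ← pow_mul]
    ring_nf
  have hsq : ((t + i + 1) ^ (2 * i) * 2 ^ (t + i + 1)) ^ 2 ≤ (2 ^ ((i + 2) * t)) ^ 2 :=
    calc ((t + i + 1) ^ (2 * i) * 2 ^ (t + i + 1)) ^ 2
        = ((t + i + 1) ^ 4) ^ i * 2 ^ (2 * (t + i + 1)) := hsquare
      _ ≤ (2 ^ (t + i + 1)) ^ i * 2 ^ (2 * (t + i + 1)) := by gcongr
      _ = 2 ^ ((i + 2) * (t + i + 1)) := by ring
      _ ≤ 2 ^ (2 * ((i + 2) * t)) := pow_le_pow_right₀ one_le_two (by nlinarith)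
      _ = (2 ^ ((i + 2) * t)) ^ 2 := by ring
  calc (t + i + 1) ^ (2 * (i + 2)) * 2 ^ (t + i + 1)
      = (t + i + 1) ^ 4 * ((t + i + 1) ^ (2 * i) * 2 ^ (t + i + 1)) := by ring
    _ ≤ (t + i + 1) ^ 4 * 2 ^ ((i + 2) * t) := by
      gcongr
      exact (Nat.pow_le_pow_iff_left two_ne_zero).1 hsq

theorem choose_mul_choose_mul_two_pow_le {n m k : ℕ} (hm : m ^ 4 ≤ 2 ^ m) (hk : 1 ≤ k)
    (hkn : k ≤ n) (hnm : n ≤ m) :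
    n.choose k * m.choose (k - 1) * 2 ^ m ≤ m ^ 4 * 2 ^ (k * (m + 1 - k)) := by
  -- the exponent `k * (m + 1 - k)` is symmetric under `k ↦ m + 1 - k`
  set j := min k (m + 1 - k) with hj_def
  have hm1 : 1 ≤ m := by omega
  have hn_choose : n.choose k ≤ m ^ j :=
    (Nat.choose_le_choose k hnm).trans <|
      (Nat.choose_le_pow_min m k).trans (pow_le_pow_right₀ hm1 (by omega))
  have hm_choose : m.choose (k - 1) ≤ m ^ j :=
    (Nat.choose_le_pow_min m (k - 1)).trans (pow_le_pow_right₀ hm1 (by omega))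
  have hj : j * (m + 1 - j) = k * (m + 1 - k) := by
    rcases le_total k (m + 1 - k) with h | h
    · rw [hj_def, min_eq_left h]
    · rw [hj_def, min_eq_right h, Nat.sub_sub_self (by omega), mul_comm]
  calc n.choose k * m.choose (k - 1) * 2 ^ m ≤ m ^ j * m ^ j * 2 ^ m := by gcongr
    _ = m ^ (2 * j) * 2 ^ m := by ring
    _ ≤ m ^ 4 * 2 ^ (j * (m + 1 - j)) := pow_mul_two_pow_le hm (by omega) (by omega)
    _ = m ^ 4 * 2 ^ (k * (m + 1 - k)) := by rw [hj]

section Combinatorics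

variable {α β : Type*}

def HasCompleteMatching (E : Finset (α × β)) : Prop :=
  ∃ f : α → β, Function.Injective f ∧ ∀ a, (a, f a) ∈ E

theorem not_hasCompleteMatching_of_forall_notMem {E : Finset (α × β)} (a : α)
    (ha : ∀ b, (a, b) ∉ E) : ¬ HasCompleteMatching E :=
  fun ⟨f, _, hf⟩ ↦ ha (f a) (hf a)

variable [Fintype α] [Fintype β]

/-- The largest edge set in which every neighbour of `A` lies in `B`. -/
def confiningEdges (A : Finset α) (B : Finset β) : Finset (α × β) :=
  A ×ˢ B ∪ Aᶜ ×ˢ univ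

theorem card_confiningEdges (A : Finset α) (B : Finset β) :
    #(confiningEdges A B) = #A * #B + (Fintype.card α - #A) * Fintype.card β := by
  have hdisj : Disjoint (A ×ˢ B) (Aᶜ ×ˢ (univ : Finset β)) :=
    disjoint_product.2 (Or.inl disjoint_compl_right)
  rw [confiningEdges, card_union_of_disjoint hdisj, card_product, card_product, card_compl,
    card_univ]

theorem two_pow_le_card_not_hasCompleteMatching [Nonempty α] :
    2 ^ ((Fintype.card α - 1) * Fintype.card β) ≤
      #{E : Finset (α × β) | ¬ HasCompleteMatching E} := by
  obtain ⟨a⟩ := ‹Nonempty α›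
  calc 2 ^ ((Fintype.card α - 1) * Fintype.card β)
      = #(({a}ᶜ ×ˢ univ : Finset (α × β)).powerset) := by
        rw [card_powerset, card_product, card_compl, card_singleton, card_univ]
    _ ≤ _ := by
        refine card_le_card fun E hE ↦ mem_filter.2 ⟨mem_univ _, ?_⟩
        refine not_hasCompleteMatching_of_forall_notMem a fun b hab ↦ ?_
        simpa using mem_powerset.1 hE hab

theorem exists_subset_confiningEdges_of_not_hasCompleteMatching
    (hcard : Fintype.card α ≤ Fintype.card β + 1) {E : Finset (α × β)}
    (hE : ¬ HasCompleteMatching E) :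
    ∃ A : Finset α, ∃ B : Finset β, #B + 1 = #A ∧ E ⊆ confiningEdges A B := by
  -- Hall's theorem gives a set `A` with fewer than `#A` neighbours; `B` pads its neighbourhood.
  set nbhd : α → Finset β := fun a ↦ {b | (a, b) ∈ E}
  obtain ⟨A, hA⟩ : ∃ A : Finset α, #(A.biUnion nbhd) < #A := by
    by_contra! hHall
    obtain ⟨f, hf, hfE⟩ := (all_card_le_biUnion_card_iff_existsInjective' nbhd).1 hHall
    exact hE ⟨f, hf, fun a ↦ by simpa [nbhd] using hfE a⟩
  have hAα : #A ≤ Fintype.card α := card_le_univ A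
  obtain ⟨B, hAB, -, hB⟩ := exists_subsuperset_card_eq (subset_univ (A.biUnion nbhd))
    (n := #A - 1) (by omega) (by rw [card_univ]; omega)
  refine ⟨A, B, by omega, fun ⟨a, b⟩ hab ↦ ?_⟩
  by_cases haA : a ∈ A
  · exact mem_union_left _ <| mem_product.2 ⟨haA, hAB <| mem_biUnion.2 ⟨a, haA, by simpa [nbhd]⟩⟩
  · exact mem_union_right _ <| mem_product.2 ⟨mem_compl.2 haA, mem_univ b⟩

theorem card_not_hasCompleteMatching_le (hcard : Fintype.card α ≤ Fintype.card β + 1) :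
    #{E : Finset (α × β) | ¬ HasCompleteMatching E} ≤
      ∑ k ∈ Icc 1 (Fintype.card α), (Fintype.card α).choose k * (Fintype.card β).choose (k - 1) *
        2 ^ (k * (k - 1) + (Fintype.card α - k) * Fintype.card β) := by
  set n := Fintype.card α
  set m := Fintype.card β
  let blocked (k : ℕ) : Finset (Finset (α × β)) :=
    (powersetCard k univ ×ˢ powersetCard (k - 1) univ).biUnion
      fun AB ↦ (confiningEdges AB.1 AB.2).powerset
  have hcover : ({E : Finset (α × β) | ¬ HasCompleteMatching E} : Finset _) ⊆
      (Icc 1 n).biUnion blocked := by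
    intro E hE
    obtain ⟨A, B, hAB, hEAB⟩ :=
      exists_subset_confiningEdges_of_not_hasCompleteMatching hcard (mem_filter.1 hE).2
    have hAn : #A ≤ n := card_le_univ A
    refine mem_biUnion.2 ⟨#A, mem_Icc.2 ⟨by omega, hAn⟩, mem_biUnion.2 ⟨(A, B), ?_, ?_⟩⟩
    · exact mem_product.2
        ⟨mem_powersetCard_univ.2 rfl, mem_powersetCard_univ.2 (show #B = #A - 1 by omega)⟩
    · exact mem_powerset.2 hEAB
  have hblocked (k : ℕ) :
      #(blocked k) ≤ n.choose k * m.choose (k - 1) * 2 ^ (k * (k - 1) + (n - k) * m) := by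
    calc #(blocked k)
        ≤ ∑ AB ∈ powersetCard k univ ×ˢ powersetCard (k - 1) univ,
            #(confiningEdges AB.1 AB.2).powerset := card_biUnion_le
      _ = ∑ AB ∈ powersetCard k (univ : Finset α) ×ˢ powersetCard (k - 1) (univ : Finset β),
            2 ^ (k * (k - 1) + (n - k) * m) := by
        refine sum_congr rfl fun AB hAB ↦ ?_
        simp only [mem_product, mem_powersetCard_univ] at hAB
        rw [card_powerset, card_confiningEdges, hAB.1, hAB.2]
      _ = _ := by simp [card_powersetCard, mul_assoc, n, m]
  calc _ ≤ #((Icc 1 n).biUnion blocked) := card_le_card hcover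
    _ ≤ ∑ k ∈ Icc 1 n, #(blocked k) := card_biUnion_le
    _ ≤ _ := sum_le_sum fun k _ ↦ hblocked k

theorem card_not_hasCompleteMatching_mul_two_pow_le
    (hβ : Fintype.card β ^ 4 ≤ 2 ^ Fintype.card β) (hαβ : Fintype.card α ≤ Fintype.card β) :
    #{E : Finset (α × β) | ¬ HasCompleteMatching E} * 2 ^ Fintype.card β ≤
      Fintype.card β ^ 5 * 2 ^ (Fintype.card α * Fintype.card β) := by
  set n := Fintype.card α
  set m := Fintype.card β
  have hterm (k : ℕ) (hk : k ∈ Icc 1 n) :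
      n.choose k * m.choose (k - 1) * 2 ^ (k * (k - 1) + (n - k) * m) * 2 ^ m ≤
        m ^ 4 * 2 ^ (n * m) := by
    obtain ⟨hk1, hkn⟩ := mem_Icc.1 hk
    have hexp : k * (m + 1 - k) + (k * (k - 1) + (n - k) * m) = n * m := by
      zify [hk1, hkn, hkn.trans hαβ, (hkn.trans hαβ).trans (Nat.le_succ m)]
      ring
    calc n.choose k * m.choose (k - 1) * 2 ^ (k * (k - 1) + (n - k) * m) * 2 ^ m
        = n.choose k * m.choose (k - 1) * 2 ^ m * 2 ^ (k * (k - 1) + (n - k) * m) := by ring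
      _ ≤ m ^ 4 * 2 ^ (k * (m + 1 - k)) * 2 ^ (k * (k - 1) + (n - k) * m) :=
        Nat.mul_le_mul_right _ (choose_mul_choose_mul_two_pow_le hβ hk1 hkn hαβ)
      _ = m ^ 4 * 2 ^ (n * m) := by rw [mul_assoc, ← pow_add, hexp]
  calc #{E : Finset (α × β) | ¬ HasCompleteMatching E} * 2 ^ m
      ≤ (∑ k ∈ Icc 1 n, n.choose k * m.choose (k - 1) * 2 ^ (k * (k - 1) + (n - k) * m)) *
          2 ^ m := by
        gcongr
        exact card_not_hasCompleteMatching_le (by omega)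
    _ ≤ ∑ k ∈ Icc 1 n, m ^ 4 * 2 ^ (n * m) := by
        rw [sum_mul]
        exact sum_le_sum hterm
    _ = n * (m ^ 4 * 2 ^ (n * m)) := by simp
    _ ≤ m * (m ^ 4 * 2 ^ (n * m)) := by gcongr
    _ = m ^ 5 * 2 ^ (n * m) := by ring

end Combinatorics

theorem completeMatchingProb_eq_one_sub (n m : ℕ) :
    completeMatchingProb n m =
      1 - #{E : Finset (Fin n × Fin m) | ¬ HasCompleteMatching E} / (2 : ℝ) ^ (n * m) := by
  have htotal := card_filter_add_card_filter_not (s := (univ : Finset (Finset (Fin n × Fin m))))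
    (p := HasCompleteMatching)
  rw [card_univ, Fintype.card_finset, Fintype.card_prod, Fintype.card_fin, Fintype.card_fin]
    at htotal
  change (Nat.card {E : Finset (Fin n × Fin m) // HasCompleteMatching E} : ℝ) / 2 ^ (n * m) = _
  rw [Nat.card_eq_fintype_card, Fintype.card_subtype, eq_sub_iff_add_eq,
    ← add_div, div_eq_one_iff_eq (by positivity)]
  exact_mod_cast htotal

theorem two_rpow_neg_le_card_not_hasCompleteMatching_div {n : ℕ} (m : ℕ) (hn : 1 ≤ n) :
    (2 : ℝ) ^ (-(m : ℝ)) ≤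
      #{E : Finset (Fin n × Fin m) | ¬ HasCompleteMatching E} / (2 : ℝ) ^ (n * m) := by
  have : Nonempty (Fin n) := Fin.pos_iff_nonempty.1 hn
  have hcard := two_pow_le_card_not_hasCompleteMatching (α := Fin n) (β := Fin m)
  rw [Fintype.card_fin, Fintype.card_fin] at hcard
  have hsplit : (2 : ℝ) ^ (n * m) = 2 ^ ((n - 1) * m) * 2 ^ m := by
    rw [← pow_add]
    congr 1
    zify [hn]
    ring
  rw [Real.rpow_neg zero_le_two, Real.rpow_natCast, le_div_iff₀ (by positivity), hsplit,
    inv_mul_eq_div, mul_div_cancel_right₀ _ (by positivity)]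
  exact_mod_cast hcard

theorem card_not_hasCompleteMatching_div_le {n m : ℕ} (hm : m ^ 4 ≤ 2 ^ m) (hnm : n ≤ m) :
    #{E : Finset (Fin n × Fin m) | ¬ HasCompleteMatching E} / (2 : ℝ) ^ (n * m) ≤
      (m : ℝ) ^ 5 / 2 ^ m := by
  have h := card_not_hasCompleteMatching_mul_two_pow_le (α := Fin n) (β := Fin m)
  simp only [Fintype.card_fin] at h
  rw [div_le_div_iff₀ (by positivity) (by positivity)]
  exact_mod_cast h hm hnm

theorem eventually_pow_le_two_rpow_mul (k : ℕ) {ε : ℝ} (hε : 0 < ε) :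
    ∀ᶠ m : ℕ in atTop, (m : ℝ) ^ k ≤ 2 ^ (ε * m) := by
  have hr : 1 < (2 : ℝ) ^ ε := Real.one_lt_rpow one_lt_two hε
  filter_upwards [(tendsto_pow_const_div_const_pow_of_one_lt k hr).eventually
    (gt_mem_nhds zero_lt_one)] with m hm
  rw [div_lt_one (by positivity), ← Real.rpow_mul_natCast zero_le_two] at hm
  exact hm.le

/-- For `1 ≤ n ≤ m`, the random bipartite graph `G_{n,m,1/2}` contains a complete
matching from `V₁` to `V₂` with probability `1 − 2^{−m(1+o(1))}`. -/
theorem bip_complete_matching_prob :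
    ∀ ε : ℝ, 0 < ε → ε < 1 → ∃ m₀ : ℕ, ∀ m : ℕ, m₀ ≤ m → ∀ n : ℕ, 1 ≤ n → n ≤ m →
      1 - (2 : ℝ) ^ (-(1 - ε) * m) ≤ completeMatchingProb n m ∧
        completeMatchingProb n m ≤ 1 - (2 : ℝ) ^ (-(m : ℝ)) := by
  intro ε hε hε1
  obtain ⟨m₀, hm₀⟩ := eventually_atTop.1 (eventually_pow_le_two_rpow_mul 5 hε)
  refine ⟨m₀, fun m hm n hn hnm ↦ ?_⟩
  have hm1 : (1 : ℝ) ≤ m := by exact_mod_cast hn.trans hnm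
  have h5 : (m : ℝ) ^ 5 ≤ 2 ^ (ε * m) := hm₀ m hm
  have h4 : m ^ 4 ≤ 2 ^ m := by
    have h4_real : (m : ℝ) ^ 4 ≤ 2 ^ m :=
      calc (m : ℝ) ^ 4 ≤ m ^ 5 := pow_le_pow_right₀ hm1 (by norm_num)
        _ ≤ 2 ^ (ε * m) := h5
        _ ≤ 2 ^ (m : ℝ) := Real.rpow_le_rpow_of_exponent_le one_le_two (by nlinarith)
        _ = 2 ^ m := Real.rpow_natCast 2 m
    exact_mod_cast h4_real
  have hexp : (2 : ℝ) ^ (-(1 - ε) * m) = 2 ^ (ε * m) / 2 ^ m := by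
    rw [← Real.rpow_natCast, ← Real.rpow_sub zero_lt_two]
    ring_nf
  rw [completeMatchingProb_eq_one_sub]
  constructor
  · have hfail := card_not_hasCompleteMatching_div_le h4 hnm
    have hpoly : (m : ℝ) ^ 5 / 2 ^ m ≤ 2 ^ (ε * m) / 2 ^ m := by gcongr
    linarith
  · linarith [two_rpow_neg_le_card_not_hasCompleteMatching_div m hn]
end
end

section
/- Let (G, C) be a unipolar arrangement, with side cliques the vertex sets of the components of the induced subgraph on V(G)∖C. Suppose there is a vertex x ∈ C such that for every side clique Q that is an inclusion-maximal clique of G, x has at least one neighbour in Q. Then G is 2-clique-colourable. -/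
open scoped Classical

noncomputable section

/-- A 2-clique-colouring of `G`: a colouring of the vertices with two colours such that no
inclusion-maximal clique with at least two vertices is monochromatic. -/
def TwoCliqueColourable {V : Type*} (G : SimpleGraph V) : Prop :=
  ∃ f : V → Fin 2, ∀ s : Set V, G.IsClique s →
    (∀ t : Set V, G.IsClique t → s ⊆ t → t = s) → s.Nontrivial →
    ∃ u ∈ s, ∃ v ∈ s, f u ≠ f v

section Aux

variable {V : Type*} (G : SimpleGraph V) (C : Set V)

/-- The side clique of a vertex `v`. -/
def sideClq (v : V) : Set V := {u | u ∈ (Cᶜ : Set V) ∧ (u = v ∨ G.Adj u v)}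

/-- A chosen neighbour of `x` in `Q`, if one exists. -/
noncomputable def pickNbr (x : V) (Q : Set V) : V :=
  if h : ∃ u ∈ Q, G.Adj x u then h.choose else x

theorem pickNbr_spec (x : V) (Q : Set V) (h : ∃ u ∈ Q, G.Adj x u) :
    pickNbr G x Q ∈ Q ∧ G.Adj x (pickNbr G x Q) := by
  rw [pickNbr, dif_pos h]
  exact ⟨h.choose_spec.1, h.choose_spec.2⟩

/-- The colouring. -/
noncomputable def colr (x : V) (v : V) : Fin 2 :=
  if v ∈ C then (if v = x then 0 else 1)
  else (if v = pickNbr G x (sideClq G C v) then 1 else 0)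

end Aux

/-- If `(G, C)` is a unipolar arrangement and some vertex `x ∈ C` has a neighbour in each
side clique which is an inclusion-maximal clique of `G`, then `G` is 2-clique-colourable.
(The side clique of a vertex `v ∉ C` is `{u ∉ C | u = v ∨ G.Adj u v}`.) -/
theorem unipolar_seeing_vertex_two_clique_colourable {V : Type*} [Fintype V]
    (G : SimpleGraph V) (C : Set V) (hU : IsUnipolarArrangement G C)
    (x : V) (hx : x ∈ C)
    (hsees : ∀ v ∈ (Cᶜ : Set V),
      (∀ t : Set V, G.IsClique t → {u | u ∈ (Cᶜ : Set V) ∧ (u = v ∨ G.Adj u v)} ⊆ t →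
        t = {u | u ∈ (Cᶜ : Set V) ∧ (u = v ∨ G.Adj u v)}) →
      ∃ u ∈ {u | u ∈ (Cᶜ : Set V) ∧ (u = v ∨ G.Adj u v)}, G.Adj x u) :
    TwoCliqueColourable G := by
  classical
  obtain ⟨hC, hcomp⟩ := hU
  -- basic facts about side cliques
  have hmemS : ∀ v : V, v ∉ C → v ∈ sideClq G C v := fun v hv => ⟨hv, Or.inl rfl⟩
  have hadjS : ∀ v, v ∉ C → ∀ u, u ∈ sideClq G C v → ∀ w, w ∈ sideClq G C v →
      u ≠ w → G.Adj u w := by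
    intro v hv u hu w hw huw
    obtain ⟨hu1, hu2⟩ := hu
    obtain ⟨hw1, hw2⟩ := hw
    rcases hu2 with rfl | hu2
    · rcases hw2 with rfl | hw2
      · exact absurd rfl huw
      · exact hw2.symm
    · rcases hw2 with rfl | hw2
      · exact hu2
      · have h1 : (G.induce (Cᶜ : Set V)).Adj ⟨u, hu1⟩ ⟨v, hv⟩ := hu2
        have h2 : (G.induce (Cᶜ : Set V)).Adj ⟨v, hv⟩ ⟨w, hw1⟩ := hw2.symm
        have hr : (G.induce (Cᶜ : Set V)).Reachable ⟨u, hu1⟩ ⟨w, hw1⟩ :=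
          h1.reachable.trans h2.reachable
        have hne : (⟨u, hu1⟩ : (Cᶜ : Set V)) ≠ ⟨w, hw1⟩ := by
          simpa [Subtype.ext_iff] using huw
        exact hcomp _ _ hr hne
  have hSeq : ∀ v, v ∉ C → ∀ u, u ∈ sideClq G C v → sideClq G C u = sideClq G C v := by
    intro v hv u hu
    have hvSu : v ∈ sideClq G C u := by
      refine ⟨hv, ?_⟩
      rcases hu.2 with rfl | h
      · exact Or.inl rfl
      · exact Or.inr h.symm
    ext w
    constructor
    · intro hw
      refine ⟨hw.1, ?_⟩
      rcases eq_or_ne w v with rfl | hwv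
      · exact Or.inl rfl
      · exact Or.inr (hadjS u hu.1 w hw v hvSu hwv)
    · intro hw
      refine ⟨hw.1, ?_⟩
      rcases eq_or_ne w u with rfl | hwu
      · exact Or.inl rfl
      · exact Or.inr (hadjS v hv w hw u hu hwu)
  set f : V → Fin 2 := colr G C x with hfdef
  have hfx : f x = 0 := by simp [hfdef, colr, hx]
  have hfC : ∀ v ∈ C, v ≠ x → f v = 1 := by
    intro v hv hvx; simp [hfdef, colr, hv, hvx]
  have hfN : ∀ v, v ∉ C → (f v = 1 ↔ v = pickNbr G x (sideClq G C v)) := by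
    intro v hv
    simp only [hfdef, colr, if_neg hv]
    constructor
    · intro h
      by_contra hne
      rw [if_neg hne] at h
      exact absurd h (by decide)
    · intro h; rw [if_pos h]
  refine ⟨f, ?_⟩
  intro s hclique hmax hnt
  by_contra hmono
  push_neg at hmono
  -- extension lemma: no vertex outside s is adjacent to all of s
  have hext : ∀ w, w ∉ s → (∀ a ∈ s, G.Adj w a) → False := by
    intro w hw hadj
    have hcl : G.IsClique (insert w s) := hclique.insert fun b hb _ => hadj b hb
    have := hmax _ hcl (Set.subset_insert w s)
    exact hw (this ▸ Set.mem_insert w s)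
  by_cases hxs : x ∈ s
  · -- case x ∈ s: everything has colour 0
    obtain ⟨a0, ha0, b0, hb0, hab0⟩ := hnt
    obtain ⟨b, hbs, hbx⟩ : ∃ b ∈ s, b ≠ x := by
      rcases eq_or_ne a0 x with rfl | h
      · exact ⟨b0, hb0, fun h => hab0 h.symm⟩
      · exact ⟨a0, ha0, h⟩
    have hfb : f b = 0 := (hmono b hbs x hxs).trans hfx
    have hbC : b ∉ C := by
      intro h
      rw [hfC b h hbx] at hfb
      exact absurd hfb (by decide)
    have hxb : G.Adj x b := hclique hxs hbs (Ne.symm hbx)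
    have hexu : ∃ u ∈ sideClq G C b, G.Adj x u := ⟨b, hmemS b hbC, hxb⟩
    obtain ⟨huS, hxu⟩ := pickNbr_spec G x (sideClq G C b) hexu
    set u := pickNbr G x (sideClq G C b) with hudef
    have huC : u ∉ C := huS.1
    have hfu : f u = 1 := by
      rw [hfN u huC, hSeq b hbC u huS]
    have hus : u ∉ s := by
      intro h
      rw [(hmono u h x hxs).trans hfx] at hfu
      exact absurd hfu (by decide)
    refine hext u hus ?_
    intro a has
    rcases eq_or_ne a x with rfl | hax
    · exact hxu.symm
    · have hfa : f a = 0 := (hmono a has x hxs).trans hfx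
      have haC : a ∉ C := by
        intro h
        rw [hfC a h hax] at hfa
        exact absurd hfa (by decide)
      have haSb : a ∈ sideClq G C b := by
        rcases eq_or_ne a b with rfl | h
        · exact hmemS a haC
        · exact ⟨haC, Or.inr (hclique has hbs h)⟩
      have hua : u ≠ a := fun h => hus (h ▸ has)
      exact hadjS b hbC u huS a haSb hua
  · by_cases hsC : ∃ w ∈ s, w ∈ C
    · -- case some vertex of s is in C: everything has colour 1, and x extends s
      obtain ⟨w, hws, hwC⟩ := hsC
      have hwx : w ≠ x := fun h => hxs (h ▸ hws)
      have hfw : f w = 1 := hfC w hwC hwx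
      refine hext x hxs ?_
      intro a has
      by_cases haC : a ∈ C
      · exact hC hx haC (fun h => hxs (h ▸ has))
      · have hfa : f a = 1 := (hmono a has w hws).trans hfw
        rw [hfN a haC] at hfa
        by_cases h : ∃ u ∈ sideClq G C a, G.Adj x u
        · have := (pickNbr_spec G x (sideClq G C a) h).2
          rw [← hfa] at this
          exact this
        · rw [pickNbr, dif_neg h] at hfa
          exact absurd (hfa ▸ hx) haC
    · -- case s is entirely outside C: s is a maximal side clique
      push_neg at hsC
      obtain ⟨a, has, b, hbs, hab⟩ := hnt
      have haC : a ∉ C := hsC a has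
      have hsub : s ⊆ sideClq G C a := by
        intro w hws
        rcases eq_or_ne w a with rfl | h
        · exact hmemS w (hsC w hws)
        · exact ⟨hsC w hws, Or.inr (hclique hws has h)⟩
      have hSclique : G.IsClique (sideClq G C a) := fun u hu w hw huw =>
        hadjS a haC u hu w hw huw
      have hSa : sideClq G C a = s := hmax _ hSclique hsub
      have hmaxS : ∀ t : Set V, G.IsClique t → sideClq G C a ⊆ t → t = sideClq G C a := by
        intro t ht hsub'
        rw [hSa] at hsub' ⊢
        exact hmax t ht hsub'
      obtain ⟨u, huS, hxu⟩ := hsees a haC hmaxS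
      have hexu : ∃ u ∈ sideClq G C a, G.Adj x u := ⟨u, huS, hxu⟩
      obtain ⟨hpS, hxp⟩ := pickNbr_spec G x (sideClq G C a) hexu
      set p := pickNbr G x (sideClq G C a) with hpdef
      have hps : p ∈ s := hSa ▸ hpS
      have hfp : f p = 1 := by
        rw [hfN p hpS.1, hSeq a haC p hpS]
      have key : ∀ w ∈ s, w = p := by
        intro w hws
        have hfw : f w = 1 := (hmono w hws p hps).trans hfp
        rw [hfN w (hsC w hws), hSeq a haC w (hsub hws)] at hfw
        exact hfw
      exact hab ((key a has).trans (key b hbs).symm)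
end
end

section
/- Let G be a finite simple graph whose complement Ḡ has a unipolar arrangement (Ḡ, C); thus C is a stable set of G, and the vertex sets of the components of Ḡ − C (the side independent sets) are stable sets of G partitioning V(G)∖C, any two vertices in different side independent sets being adjacent in G. Suppose C is nonempty and every vertex of C has, in G, at least one neighbour in each of at least two distinct side independent sets. Then G is 2-clique-colourable. -/
open scoped Classical

noncomputable section

/-- If the complement of `G` has a unipolar arrangement `(Gᶜ, C)` with `C` nonempty, and in
`G` every vertex of `C` has neighbours in at least two distinct side independent sets, then
`G` is 2-clique-colourable. (For `u₁, u₂ ∉ C`, being in the same side independent set is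
equivalent to `u₁ = u₂ ∨ Gᶜ.Adj u₁ u₂`.) -/
theorem co_unipolar_two_clique_colourable {V : Type*} [Fintype V]
    (G : SimpleGraph V) (C : Set V) (hU : IsUnipolarArrangement Gᶜ C)
    (hC : C.Nonempty)
    (hsees : ∀ v ∈ C, ∃ u₁ ∈ (Cᶜ : Set V), ∃ u₂ ∈ (Cᶜ : Set V),
      G.Adj v u₁ ∧ G.Adj v u₂ ∧ ¬ (u₁ = u₂ ∨ Gᶜ.Adj u₁ u₂)) :
    TwoCliqueColourable G := by
  classical
  obtain ⟨v₀, hv₀⟩ := hC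
  obtain ⟨u₁, hu₁, u₂, hu₂, hadj₁, hadj₂, hR₁₂⟩ := hsees v₀ hv₀
  set R : V → V → Prop := fun a b => a = b ∨ Gᶜ.Adj a b with hRdef
  have Rsymm : ∀ a b, R a b → R b a := by
    rintro a b (rfl | h)
    · exact Or.inl rfl
    · exact Or.inr h.symm
  have hreach : ∀ a b (ha : a ∈ (Cᶜ : Set V)) (hb : b ∈ (Cᶜ : Set V)), R a b →
      (Gᶜ.induce Cᶜ).Reachable ⟨a, ha⟩ ⟨b, hb⟩ := by
    rintro a b ha hb (rfl | hadj)
    · exact SimpleGraph.Reachable.refl _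
    · exact SimpleGraph.Adj.reachable hadj
  have Rtrans : ∀ a b c, a ∈ (Cᶜ : Set V) → b ∈ (Cᶜ : Set V) → c ∈ (Cᶜ : Set V) →
      R a b → R b c → R a c := by
    intro a b c ha hb hc hab hbc
    by_cases hac : a = c
    · exact Or.inl hac
    · refine Or.inr ?_
      have h := hU.2 ⟨a, ha⟩ ⟨c, hc⟩ ((hreach a b ha hb hab).trans (hreach b c hb hc hbc))
        (by simpa [Subtype.ext_iff] using hac)
      exact h
  have hCstable : ∀ a ∈ C, ∀ b ∈ C, ¬ G.Adj a b := by
    intro a ha b hb hadj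
    rcases eq_or_ne a b with rfl | hne
    · exact G.irrefl hadj
    · exact (hU.1 ha hb hne).2 hadj
  have hSameStable : ∀ a b, R a b → ¬ G.Adj a b := by
    rintro a b (rfl | hadj) h
    · exact G.irrefl h
    · exact hadj.2 h
  have hDiffAdj : ∀ a b, a ≠ b → ¬ R a b → G.Adj a b := by
    intro a b hne hnR
    by_contra h
    exact hnR (Or.inr ⟨hne, h⟩)
  refine ⟨fun u => if u ∈ C ∨ R u u₁ then 0 else 1, ?_⟩
  intro s hs hmax hnt
  by_contra hmono
  push_neg at hmono
  have hext : ∀ w, (∀ x ∈ s, w ≠ x ∧ G.Adj w x) → False := by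
    intro w hw
    have hcl : G.IsClique (insert w s) := hs.insert (fun b hb _ => (hw b hb).2)
    have heq := hmax _ hcl (Set.subset_insert _ _)
    have hws : w ∈ s := heq ▸ Set.mem_insert w s
    exact (hw w hws).1 rfl
  have hcol : ∀ u ∈ s, ∀ w ∈ s, (u ∈ C ∨ R u u₁) → (w ∈ C ∨ R w u₁) := by
    intro u hu w hw h
    by_contra hww
    have h2 := hmono u hu w hw
    simp only [if_pos h, if_neg hww] at h2
    exact absurd h2 (by decide)
  by_cases hsC : ∃ v ∈ s, v ∈ C
  · obtain ⟨v, hvs, hvC⟩ := hsC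
    -- all of s is colour 0
    have hall : ∀ u ∈ s, u ∈ C ∨ R u u₁ := fun u hu => hcol v hvs u hu (Or.inl hvC)
    have huniqC : ∀ u ∈ s, u ∈ C → u = v := by
      intro u hu huC
      by_contra hne
      exact hCstable u huC v hvC (hs hu hvs hne)
    -- get u ∈ s with u ≠ v
    obtain ⟨x, hx, y, hy, hxy⟩ := hnt
    obtain ⟨u, hu, huv⟩ : ∃ u ∈ s, u ≠ v := by
      by_cases hxv : x = v
      · exact ⟨y, hy, by rw [← hxv]; exact fun h => hxy h.symm⟩
      · exact ⟨x, hx, hxv⟩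
    have huC : u ∉ C := fun h => huv (huniqC u hu h)
    have hRu : R u u₁ := (hall u hu).resolve_left huC
    have huCc : u ∈ (Cᶜ : Set V) := huC
    -- all of s is {v, u}
    have honly : ∀ x ∈ s, x = v ∨ x = u := by
      intro z hz
      by_cases hzv : z = v
      · exact Or.inl hzv
      · refine Or.inr ?_
        have hzC : z ∉ C := fun h => hzv (huniqC z hz h)
        have hRz : R z u₁ := (hall z hz).resolve_left hzC
        by_contra hzu
        have : R z u := Rtrans z u₁ u hzC hu₁ huCc hRz (Rsymm _ _ hRu)
        exact hSameStable z u this (hs hz hu hzu)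
    obtain ⟨w₁, hw₁, w₂, hw₂, hvw₁, hvw₂, hw⟩ := hsees v hvC
    have final : ∀ w ∈ (Cᶜ : Set V), G.Adj v w → ¬ R u w → False := by
      intro w hwCc hvw hnRuw
      have hwu : w ≠ u := fun h => hnRuw (Rsymm _ _ (Or.inl h))
      have hadjwu : G.Adj w u := hDiffAdj w u hwu (fun h => hnRuw (Rsymm _ _ h))
      refine hext w ?_
      intro x hx
      rcases honly x hx with rfl | rfl
      · exact ⟨fun h => hwCc (h ▸ hvC), hvw.symm⟩
      · exact ⟨hwu, hadjwu⟩
    by_cases h1 : R u w₁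
    · by_cases h2 : R u w₂
      · exact hw (Rtrans w₁ u w₂ hw₁ huCc hw₂ (Rsymm _ _ h1) h2)
      · exact final w₂ hw₂ hvw₂ h2
    · exact final w₁ hw₁ hvw₁ h1
  · push_neg at hsC
    obtain ⟨x, hx, y, hy, hxy⟩ := hnt
    by_cases hx0 : x ∈ C ∨ R x u₁
    · have hy0 := hcol x hx y hy hx0
      have hRx : R x u₁ := hx0.resolve_left (hsC x hx)
      have hRy : R y u₁ := hy0.resolve_left (hsC y hy)
      have : R x y := Rtrans x u₁ y (hsC x hx) hu₁ (hsC y hy) hRx (Rsymm _ _ hRy)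
      exact hSameStable x y this (hs hx hy hxy)
    · have hall : ∀ u ∈ s, ¬ (u ∈ C ∨ R u u₁) := by
        intro u hu h
        exact hx0 (hcol u hu x hx h)
      refine hext u₁ ?_
      intro z hz
      have hz1 : ¬ R z u₁ := fun h => hall z hz (Or.inr h)
      have hzu₁ : z ≠ u₁ := fun h => hz1 (Or.inl h)
      exact ⟨fun h => hzu₁ h.symm, (hDiffAdj z u₁ hzu₁ hz1).symm⟩
end
end

section
/- Let σ be a partition sampled uniformly at random from Π_n, let r = r(n) be the unique positive real root of r·e^r = n, and let λ = n/r = e^r. Then for every fixed ε > 0 there exists n₀ such that for all n ≥ n₀: P( | |σ| − λ | ≥ ε·λ ) < n·e^{−n(ε − ln(1+ε))}, where |σ| denotes the number of parts of σ. Equivalently, the number of partitions π ∈ Π_n with | |π| − λ | ≥ ε·λ is less than B_n · n·e^{−n(ε − ln(1+ε))}. -/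
open scoped Classical

noncomputable section

/-- the `n`-th Bell number: the number of partitions of `{1,…,n}` -/
def bell (n : ℕ) : ℕ := Nat.card (Finpartition (Finset.univ : Finset (Fin n)))

/-!
Sorting the maps `Fin n → Fin m` by their kernel gives `m ^ n = ∑_π m (m-1) ⋯ (m-|π|+1)`, hence
`S(n,k) ≤ k ^ n / k!` for the number `S(n,k)` of partitions with `k` parts, and
`B_n ≥ m ^ n / m!` for every `m`.

By Stirling, `x ^ n / x!` is `exp (n log x - x log x + x)` up to a factor polynomial in `x`. With
`λ = e^r`, so that `n = λ log λ`, and `c = k / λ`, this exponent equals its value at `λ` minus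
`n (c - 1 - log c) + λ (c log c - c + 1)`. Both brackets are convex in `c` with minimum `0` at
`c = 1`. When `|c - 1| ≥ ε` the first one is at least `ε - log (1 + ε)` (on the left of `1` because
`log (1 + ε) - log (1 - ε) ≥ 2ε`) and the second is at least some `δ > 0`. For large `r` the
gain `λ δ` beats the polynomial Stirling factors and the comparison of the exponent at `λ` and at
`m = ⌈λ⌉`, so that `S(n,k) ≤ e^{-n(ε - log(1+ε))} B_n / 2` for each of the `n + 1` bad values
of `k`.
-/

section

open Finset Function Real Filter InformationTheory
open scoped Nat

namespace Finpartition

variable {α β : Type*} [Fintype α] [DecidableEq α]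

def partOf (P : Finpartition (univ : Finset α)) (a : α) : P.parts :=
  ⟨P.part a, P.part_mem.2 (mem_univ a)⟩

lemma partOf_surjective (P : Finpartition (univ : Finset α)) : Surjective P.partOf := by
  rintro ⟨t, ht⟩
  obtain ⟨a, -, rfl⟩ := P.part_surjOn ht
  exact ⟨a, rfl⟩

lemma partOf_eq_partOf_iff {P : Finpartition (univ : Finset α)} {a b : α} :
    P.partOf a = P.partOf b ↔ b ∈ P.part a := by
  rw [partOf, partOf, Subtype.mk.injEq, P.mem_part_iff_part_eq_part (mem_univ b) (mem_univ a),
    eq_comm]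

lemma ext_of_mem_part {P Q : Finpartition (univ : Finset α)}
    (h : ∀ a b, b ∈ P.part a ↔ b ∈ Q.part a) : P = Q := by
  have hpart : P.part = Q.part := funext fun a ↦ Finset.ext (h a)
  ext t
  constructor <;> intro ht
  · obtain ⟨a, -, rfl⟩ := P.part_surjOn ht
    exact hpart ▸ Q.part_mem.2 (mem_univ a)
  · obtain ⟨a, -, rfl⟩ := Q.part_surjOn ht
    exact hpart ▸ P.part_mem.2 (mem_univ a)

def ker (f : α → β) : Finpartition (univ : Finset α) := ofSetoid (Setoid.ker f)

lemma partOf_ker_eq_iff {f : α → β} {a b : α} :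
    (ker f).partOf a = (ker f).partOf b ↔ f a = f b := by
  rw [partOf_eq_partOf_iff, ker, mem_part_ofSetoid_iff_rel]
  rfl

lemma ker_comp_partOf (P : Finpartition (univ : Finset α)) (e : P.parts ↪ β) :
    ker (e ∘ P.partOf) = P :=
  ext_of_mem_part fun a b ↦ by
    rw [← partOf_eq_partOf_iff, ← partOf_eq_partOf_iff, partOf_ker_eq_iff, comp_apply, comp_apply,
      e.apply_eq_iff_eq]

def sigmaEmbeddingEquivFun : (Σ P : Finpartition (univ : Finset α), P.parts ↪ β) ≃ (α → β) :=
  Equiv.ofBijective (fun p ↦ p.2 ∘ p.1.partOf) <| by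
    constructor
    · rintro ⟨P, e⟩ ⟨Q, e'⟩ h
      obtain rfl : P = Q := by
        rw [← ker_comp_partOf P e, ← ker_comp_partOf Q e']
        exact congrArg ker h
      congr
      ext t
      obtain ⟨a, rfl⟩ := P.partOf_surjective t
      exact congrFun h a
    · intro f
      set s := surjInv (ker f).partOf_surjective
      have hs : ∀ t, (ker f).partOf (s t) = t := surjInv_eq (ker f).partOf_surjective
      refine ⟨⟨ker f, ⟨f ∘ s, fun t t' h ↦ ?_⟩⟩, funext fun a ↦ ?_⟩
      · rw [← hs t, ← hs t']
        exact partOf_ker_eq_iff.2 h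
      · exact partOf_ker_eq_iff.1 (hs _)

theorem sum_descFactorial_card_parts (m : ℕ) :
    ∑ P : Finpartition (univ : Finset α), m.descFactorial #P.parts = m ^ Fintype.card α := by
  have := Fintype.card_congr (sigmaEmbeddingEquivFun (α := α) (β := Fin m))
  simpa [Fintype.card_sigma, Fintype.card_embedding_eq] using this

theorem card_filter_card_parts_eq_mul_factorial_le (k : ℕ) :
    #{P : Finpartition (univ : Finset α) | #P.parts = k} * k ! ≤ k ^ Fintype.card α :=
  calc #{P : Finpartition (univ : Finset α) | #P.parts = k} * k !
      = ∑ P ∈ {P : Finpartition (univ : Finset α) | #P.parts = k}, k.descFactorial #P.parts := by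
        rw [sum_congr rfl fun P hP ↦ by rw [(mem_filter.1 hP).2, Nat.descFactorial_self],
          sum_const, smul_eq_mul]
    _ ≤ ∑ P : Finpartition (univ : Finset α), k.descFactorial #P.parts :=
        sum_le_sum_of_subset (filter_subset _ _)
    _ = k ^ Fintype.card α := sum_descFactorial_card_parts k

theorem card_filter_le_of_forall_card_parts_eq_le (Q : ℕ → Prop) {C : ℝ} (hC : 0 ≤ C)
    (h : ∀ k, Q k → (#{P : Finpartition (univ : Finset α) | #P.parts = k} : ℝ) ≤ C) :
    (#{P : Finpartition (univ : Finset α) | Q #P.parts} : ℝ) ≤ (Fintype.card α + 1) * C := by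
  have hmaps : ∀ P ∈ ({P : Finpartition (univ : Finset α) | Q #P.parts} : Finset _),
      #P.parts ∈ range (Fintype.card α + 1) := fun P _ ↦
    mem_range.2 (Nat.lt_succ_of_le (P.card_parts_le_card.trans (card_univ (α := α)).le))
  rw [card_eq_sum_card_fiberwise hmaps, Nat.cast_sum]
  calc ∑ k ∈ range (Fintype.card α + 1), (#{P ∈ ({P : Finpartition (univ : Finset α) |
          Q #P.parts} : Finset _) | #P.parts = k} : ℝ)
      ≤ ∑ _k ∈ range (Fintype.card α + 1), C := sum_le_sum fun k _ ↦ ?_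
    _ = (Fintype.card α + 1) * C := by simp
  by_cases hk : Q k
  · refine le_trans ?_ (h k hk)
    exact_mod_cast card_le_card (monotone_filter_left _ (filter_subset _ _))
  · rw [filter_filter, filter_false_of_mem fun P _ ⟨hQ, hP⟩ ↦ hk (hP ▸ hQ)]
    simpa using hC

end Finpartition

theorem Nat.descFactorial_le_factorial (m k : ℕ) : m.descFactorial k ≤ m ! := by
  rcases le_or_gt k m with h | h
  · exact Nat.le_of_dvd m.factorial_pos
      ⟨(m - k)!, by rw [← Nat.factorial_mul_descFactorial h, mul_comm]⟩
  · simp [Nat.descFactorial_eq_zero_iff_lt.2 h]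

theorem pow_le_bell_mul_factorial (n m : ℕ) : m ^ n ≤ bell n * m ! :=
  calc m ^ n = ∑ P : Finpartition (univ : Finset (Fin n)), m.descFactorial #P.parts := by
        rw [Finpartition.sum_descFactorial_card_parts, Fintype.card_fin]
    _ ≤ ∑ _P : Finpartition (univ : Finset (Fin n)), m ! :=
        sum_le_sum fun _ _ ↦ Nat.descFactorial_le_factorial _ _
    _ = bell n * m ! := by rw [sum_const, card_univ, smul_eq_mul, bell, Nat.card_eq_fintype_card]

namespace Stirling

theorem log_factorial_le {n : ℕ} (hn : n ≠ 0) : log n ! ≤ n * log n - n + log n / 2 + 1 := by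
  obtain ⟨k, rfl⟩ := Nat.exists_eq_succ_of_ne_zero hn
  have hseq : log (stirlingSeq (k + 1)) ≤ log (exp 1 / √2) := by
    rw [← stirlingSeq_one]
    exact log_le_log (stirlingSeq'_pos k) (stirlingSeq'_antitone (Nat.zero_le k))
  rw [log_stirlingSeq_formula, log_div (exp_pos 1).ne' (by positivity), log_exp,
    log_sqrt zero_le_two, log_mul two_ne_zero (by positivity),
    log_div (by positivity) (exp_pos 1).ne', log_exp] at hseq
  linarith

theorem mul_log_sub_le_log_factorial (n : ℕ) : n * log n - n ≤ log n ! := by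
  rcases eq_or_ne n 0 with rfl | hn
  · simp
  have := le_log_factorial_stirling hn
  have : 0 ≤ log n := log_natCast_nonneg n
  have : 0 ≤ log (2 * π) := log_nonneg (by linarith [pi_gt_three])
  linarith

end Stirling

lemma pow_div_factorial_eq_exp (n : ℕ) {k : ℕ} (hk : k ≠ 0) :
    (k : ℝ) ^ n / k ! = exp (n * log k - log k !) := by
  rw [exp_sub, exp_log (by positivity), ← log_pow, exp_log (by positivity)]

lemma ConvexOn.le_or_le_of_le_abs_sub_one {f : ℝ → ℝ} (hf : ConvexOn ℝ (Set.Ioi 0) f)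
    (hmin : IsMinOn f (Set.Ioi 0) 1) {ε c : ℝ} (hε : 0 ≤ ε) (hc : 0 < c) (h : ε ≤ |c - 1|) :
    f (1 + ε) ≤ f c ∨ (ε < 1 ∧ f (1 - ε) ≤ f c) := by
  have key : ∀ x ∈ Set.uIcc 1 c, f x ≤ f c := fun x hx ↦
    (hf.le_on_segment (Set.mem_Ioi.2 one_pos) hc (segment_eq_uIcc (1 : ℝ) c ▸ hx)).trans
      (max_le (hmin hc) le_rfl)
  rcases le_abs'.1 h with h | h
  · exact .inr ⟨by linarith, key _ (Set.mem_uIcc.2 (.inr ⟨by linarith, by linarith⟩))⟩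
  · exact .inl (key _ (Set.mem_uIcc.2 (.inl ⟨by linarith, by linarith⟩)))

def logDeficit (x : ℝ) : ℝ := x - 1 - log x

lemma convexOn_logDeficit : ConvexOn ℝ (Set.Ioi 0) logDeficit := by
  have h : logDeficit = (id + fun _ ↦ -1) - log := by
    funext x
    simp only [logDeficit, Pi.sub_apply, Pi.add_apply, id]
    ring
  rw [h]
  exact ((convexOn_id (convex_Ioi 0)).add_const (-1)).sub strictConcaveOn_log_Ioi.concaveOn

lemma isMinOn_logDeficit : IsMinOn logDeficit (Set.Ioi 0) 1 := fun x hx ↦ by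
  simpa [logDeficit] using log_le_sub_one_of_pos hx

lemma logDeficit_le_sub_one {x : ℝ} (hx : 1 ≤ x) : logDeficit x ≤ x - 1 := by
  simpa [logDeficit] using log_nonneg hx

lemma logDeficit_one_add_le_one_sub {ε : ℝ} (hε : 0 ≤ ε) (hε₁ : ε < 1) :
    logDeficit (1 + ε) ≤ logDeficit (1 - ε) := by
  have hsum := hasSum_log_sub_log_of_abs_lt_one (abs_lt.2 ⟨by linarith, hε₁⟩)
  have := le_hasSum hsum 0 fun j _ ↦ by positivity
  simp only [logDeficit]
  norm_num at this
  linarith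

lemma logDeficit_one_add_le {ε c : ℝ} (hε : 0 ≤ ε) (hc : 0 < c) (h : ε ≤ |c - 1|) :
    logDeficit (1 + ε) ≤ logDeficit c := by
  rcases convexOn_logDeficit.le_or_le_of_le_abs_sub_one isMinOn_logDeficit hε hc h with
    h | ⟨hε₁, h⟩
  · exact h
  · exact (logDeficit_one_add_le_one_sub hε hε₁).trans h

lemma klFun_pos {x : ℝ} (hx : 0 ≤ x) (hx₁ : x ≠ 1) : 0 < klFun x :=
  (klFun_nonneg hx).lt_of_ne' fun h ↦ hx₁ ((klFun_eq_zero_iff hx).1 h)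

lemma klFun_le_sq {x : ℝ} (hx : 0 < x) : klFun x ≤ (x - 1) ^ 2 := by
  have := mul_le_mul_of_nonneg_left (log_le_sub_one_of_pos hx) hx.le
  rw [klFun_apply]
  nlinarith

lemma exists_pos_forall_le_klFun {ε : ℝ} (hε : 0 < ε) :
    ∃ δ > 0, ∀ c, 0 < c → ε ≤ |c - 1| → δ ≤ klFun c := by
  set η := min ε (1 / 2)
  have hη : 0 < η := lt_min hε one_half_pos
  have hη₂ : η ≤ 1 / 2 := min_le_right _ _
  refine ⟨min (klFun (1 + η)) (klFun (1 - η)),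
    lt_min (klFun_pos (by linarith) (by linarith)) (klFun_pos (by linarith) (by linarith)),
    fun c hc h ↦ ?_⟩
  rcases convexOn_Ioi_klFun.le_or_le_of_le_abs_sub_one
    (isMinOn_klFun.on_subset Set.Ioi_subset_Ici_self) hη.le hc ((min_le_left _ _).trans h) with
    h | ⟨-, h⟩
  · exact (min_le_left _ _).trans h
  · exact (min_le_right _ _).trans h

def powFactorialExponent (n x : ℝ) : ℝ := n * log x - (x * log x - x)

lemma powFactorialExponent_eq {n l x : ℝ} (hl : 0 < l) (hx : 0 < x) (hn : n = l * log l) :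
    powFactorialExponent n x =
      powFactorialExponent n l - n * logDeficit (x / l) - l * klFun (x / l) := by
  rw [powFactorialExponent, powFactorialExponent, logDeficit, klFun_apply,
    log_div hx.ne' hl.ne', hn]
  field_simp
  ring

lemma sub_le_powFactorialExponent_ceil {n r : ℝ} (hr : 0 ≤ r) (hn : n = r * exp r) :
    powFactorialExponent n (exp r) - r - 1 ≤ powFactorialExponent n ⌈exp r⌉₊ := by
  have hlog : log (exp r) = r := log_exp r
  set l := exp r
  have hl : 1 ≤ l := one_le_exp hr
  have hm : l ≤ ⌈l⌉₊ := Nat.le_ceil l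
  have hm' : (⌈l⌉₊ : ℝ) < l + 1 := Nat.ceil_lt_add_one (by positivity)
  have hc : 1 ≤ ⌈l⌉₊ / l := (one_le_div (by positivity)).2 hm
  have hc' : ⌈l⌉₊ / l - 1 ≤ 1 / l := by
    rw [div_sub_one (by positivity)]
    gcongr
    linarith
  have hψ : n * logDeficit (⌈l⌉₊ / l) ≤ r :=
    calc n * logDeficit (⌈l⌉₊ / l) ≤ n * (1 / l) := by
          gcongr
          · rw [hn]; positivity
          · exact (logDeficit_le_sub_one hc).trans hc'
      _ = r := by rw [hn]; field_simp
  have hχ : l * klFun (⌈l⌉₊ / l) ≤ 1 :=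
    calc l * klFun (⌈l⌉₊ / l) ≤ l * (1 / l) ^ 2 := by
          gcongr
          exact (klFun_le_sq (by positivity)).trans (pow_le_pow_left₀ (by linarith) hc' 2)
      _ ≤ 1 := by
          rw [div_pow, one_pow, mul_one_div, div_le_one (by positivity)]
          nlinarith
  have := powFactorialExponent_eq (n := n) (x := ⌈l⌉₊) (exp_pos r) (by linarith)
    (by rw [hn, hlog, mul_comm])
  linarith

lemma pow_div_factorial_le_exp_mul (n : ℕ) {k m : ℕ} (hk : k ≠ 0) (hm : m ≠ 0) :
    (k : ℝ) ^ n / k ! ≤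
      exp (powFactorialExponent n k - powFactorialExponent n m + log m / 2 + 1) *
        ((m : ℝ) ^ n / m !) := by
  rw [pow_div_factorial_eq_exp n hk, pow_div_factorial_eq_exp n hm, ← exp_add, exp_le_exp,
    powFactorialExponent, powFactorialExponent]
  linarith [Stirling.mul_log_sub_le_log_factorial k, Stirling.log_factorial_le hm]

lemma pow_div_factorial_le_of_far {n k : ℕ} {r a δ : ℝ} (hr : 1 ≤ r) (hn : (n : ℝ) = r * exp r)
    (hk : k ≠ 0) (ha : a ≤ logDeficit (k / exp r)) (hδ : δ ≤ klFun (k / exp r))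
    (hrδ : 2 * r + 4 ≤ δ * exp r) :
    (k : ℝ) ^ n / k ! ≤ exp (-(n * a)) / 2 * ((⌈exp r⌉₊ : ℝ) ^ n / (⌈exp r⌉₊)!) := by
  have hl : 1 ≤ exp r := one_le_exp (by linarith)
  have hm : ⌈exp r⌉₊ ≠ 0 := (Nat.ceil_pos.2 (exp_pos r)).ne'
  have hk_exp := powFactorialExponent_eq (n := n) (x := k) (exp_pos r) (by positivity)
    (by rw [hn, log_exp, mul_comm])
  have hm_exp := sub_le_powFactorialExponent_ceil (by linarith) hn
  have hlog_m : log ⌈exp r⌉₊ ≤ r + 1 := by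
    have : (⌈exp r⌉₊ : ℝ) ≤ 2 * exp r := by linarith [Nat.ceil_lt_add_one (exp_pos r).le]
    calc log ⌈exp r⌉₊ ≤ log (2 * exp r) := log_le_log (by positivity) this
      _ = log 2 + r := by rw [log_mul two_ne_zero (exp_pos r).ne', log_exp]
      _ ≤ r + 1 := by linarith [log_two_lt_d9]
  have hψ : n * a ≤ n * logDeficit (k / exp r) := by gcongr
  have hχ : δ * exp r ≤ exp r * klFun (k / exp r) := by rw [mul_comm]; gcongr
  refine (pow_div_factorial_le_exp_mul n hk hm).trans
    (mul_le_mul_of_nonneg_right ?_ (by positivity))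
  rw [show exp (-(n * a)) / 2 = exp (-(n * a) - log 2) by rw [exp_sub, exp_log two_pos],
    exp_le_exp]
  linarith [log_two_lt_d9]

theorem card_parts_eq_le_of_far {n k : ℕ} {r ε δ : ℝ} (hr : 1 ≤ r) (hn : (n : ℝ) = r * exp r)
    (hε : 0 ≤ ε) (hδ : ∀ c, 0 < c → ε ≤ |c - 1| → δ ≤ klFun c) (hrδ : 2 * r + 4 ≤ δ * exp r)
    (hk : ε ≤ |k / exp r - 1|) :
    (#{P : Finpartition (univ : Finset (Fin n)) | #P.parts = k} : ℝ) ≤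
      exp (-(n * logDeficit (1 + ε))) / 2 * bell n := by
  have hS := Finpartition.card_filter_card_parts_eq_mul_factorial_le (α := Fin n) k
  rw [Fintype.card_fin] at hS
  rcases eq_or_ne k 0 with rfl | hk₀
  · have hn₀ : n ≠ 0 := by
      rintro rfl
      have : 0 < r * exp r := by positivity
      simp_all
    simp only [Nat.factorial_zero, mul_one, zero_pow hn₀, Nat.le_zero] at hS
    rw [hS, Nat.cast_zero]
    positivity
  have hc : 0 < (k : ℝ) / exp r := by positivity
  calc (#{P : Finpartition (univ : Finset (Fin n)) | #P.parts = k} : ℝ) ≤ (k : ℝ) ^ n / k ! := by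
        rw [le_div_iff₀ (by positivity)]
        exact_mod_cast hS
    _ ≤ exp (-(n * logDeficit (1 + ε))) / 2 * ((⌈exp r⌉₊ : ℝ) ^ n / (⌈exp r⌉₊)!) :=
        pow_div_factorial_le_of_far hr hn hk₀ (logDeficit_one_add_le hε hc hk) (hδ _ hc hk) hrδ
    _ ≤ exp (-(n * logDeficit (1 + ε))) / 2 * bell n := by
        gcongr
        rw [div_le_iff₀ (by positivity)]
        exact_mod_cast pow_le_bell_mul_factorial n _

lemma eventually_two_mul_add_four_le_mul_exp {δ : ℝ} (hδ : 0 < δ) :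
    ∀ᶠ r in atTop, 2 * r + 4 ≤ δ * exp r := by
  filter_upwards [(tendsto_exp_div_pow_atTop 1).eventually_ge_atTop (6 / δ),
    eventually_ge_atTop 1] with r hr hr₁
  rw [pow_one, div_le_div_iff₀ hδ (by linarith)] at hr
  linarith

lemma exists_nat_forall_of_eventually {p : ℝ → Prop} (h : ∀ᶠ r in atTop, p r) :
    ∃ n₀ : ℕ, ∀ n : ℕ, n₀ ≤ n → ∀ r : ℝ, 0 < r → r * exp r = n → p r := by
  obtain ⟨r₀, hr₀⟩ := (h.and (eventually_gt_atTop 0)).exists_forall_of_atTop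
  refine ⟨⌈r₀ * exp r₀⌉₊, fun n hn r hr hrn ↦ (hr₀ r ?_).1⟩
  by_contra! hlt
  have : r * exp r < r₀ * exp r₀ := mul_lt_mul'' hlt (exp_lt_exp.2 hlt) hr.le (exp_pos r).le
  have : (⌈r₀ * exp r₀⌉₊ : ℝ) ≤ n := by exact_mod_cast hn
  linarith [Nat.le_ceil (r₀ * exp r₀)]

-- Closes `open Real`, under which the bound variable `π` below would parse as `Real.pi`.
end

/-- Concentration of the number of parts of a uniformly random partition of `{1,…,n}`:
if `r·e^r = n` and `λ = n/r`, then `P(| |σ| − λ | ≥ ελ) < n·e^{−n(ε − ln(1+ε))}`. -/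
theorem random_partition_parts_concentration :
    ∀ ε : ℝ, 0 < ε → ∃ n₀ : ℕ, ∀ n : ℕ, n₀ ≤ n → ∀ r : ℝ, 0 < r →
      r * Real.exp r = (n : ℝ) →
      (Nat.card {π : Finpartition (Finset.univ : Finset (Fin n)) //
          ε * ((n : ℝ) / r) ≤ |(π.parts.card : ℝ) - (n : ℝ) / r|} : ℝ) / (bell n : ℝ) <
        (n : ℝ) * Real.exp (-((n : ℝ) * (ε - Real.log (1 + ε)))) := by
  intro ε hε
  obtain ⟨δ, hδ, hδχ⟩ := exists_pos_forall_le_klFun hε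
  obtain ⟨n₀, hn₀⟩ := exists_nat_forall_of_eventually
    ((Filter.eventually_ge_atTop 1).and (eventually_two_mul_add_four_le_mul_exp hδ))
  refine ⟨n₀, fun n hn r hr hrn ↦ ?_⟩
  obtain ⟨hr₁, hrδ⟩ := hn₀ n hn r hr hrn
  have hl : (n : ℝ) / r = Real.exp r := by rw [← hrn]; field_simp
  have hψ : ε - Real.log (1 + ε) = logDeficit (1 + ε) := by rw [logDeficit, add_sub_cancel_left]
  have hn₂ : (2 : ℝ) ≤ n := by rw [← hrn]; nlinarith [Real.add_one_le_exp r]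
  have hB : (0 : ℝ) < bell n := by rw [bell]; exact_mod_cast Nat.card_pos
  have hbad : ∀ k : ℕ, ε * Real.exp r ≤ |(k : ℝ) - Real.exp r| → ε ≤ |k / Real.exp r - 1| := by
    intro k hk
    rwa [div_sub_one (Real.exp_pos r).ne', abs_div, abs_of_pos (Real.exp_pos r),
      le_div_iff₀ (Real.exp_pos r)]
  have hcount := Finpartition.card_filter_le_of_forall_card_parts_eq_le
    (fun k : ℕ ↦ ε * Real.exp r ≤ |(k : ℝ) - Real.exp r|) (by positivity) fun k hk ↦
      card_parts_eq_le_of_far hr₁ hrn.symm hε.le hδχ hrδ (hbad k hk)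
  rw [Fintype.card_fin] at hcount
  rw [hl, hψ, Nat.card_eq_fintype_card, Fintype.card_subtype, div_lt_iff₀ hB]
  refine hcount.trans_lt ?_
  have : 0 < Real.exp (-(n * logDeficit (1 + ε))) * bell n := by positivity
  nlinarith
end
end
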